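/- arXiv:2308.10725 — 8 statements merged into one kernel-verified Lean document; each statement's English description precedes it below -/
import Mathlib

section
/- For every natural number n ≥ 1, the kernel of the inclusion matrix M(n) (that is, the space of vectors x ∈ ℚ^{(Fin n)³} with M(n)·x = 0) has dimension (n − 1)³ over ℚ. -/
/-- The two coordinates of a triple other than coordinate `c`, taken in order. -/
def omitCoord (n : ℕ) (c : Fin 3) (x : Fin n × Fin n × Fin n) : Fin n × Fin n :=
  if c = 0 then (x.2.1, x.2.2) else if c = 1 then (x.1, x.2.2) else (x.1, x.2.1)

/-- The inclusion matrix `M(n)`: rows are indexed by a coordinate `c ∈ {1,2,3}` to omit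
together with a pair `(u,v) ∈ (Fin n)²`, columns by triples `(x₁,x₂,x₃) ∈ (Fin n)³`;
the entry is `1` iff the two coordinates of the triple other than coordinate `c`,
taken in order, equal `(u,v)`. -/
def inclusionMatrix (n : ℕ) :
    Matrix (Fin 3 × Fin n × Fin n) (Fin n × Fin n × Fin n) ℚ :=
  fun r x => if omitCoord n r.1 x = r.2 then 1 else 0

lemma mv0 (n : ℕ) (x : Fin n × Fin n × Fin n → ℚ) (u v : Fin n) :
    (inclusionMatrix n).mulVec x (0, u, v) = ∑ a, x (a, u, v) := by
  simp [Matrix.mulVec, dotProduct, inclusionMatrix, omitCoord,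
    Fintype.sum_prod_type, Prod.mk.injEq, ite_and]

lemma mv1 (n : ℕ) (x : Fin n × Fin n × Fin n → ℚ) (u v : Fin n) :
    (inclusionMatrix n).mulVec x (1, u, v) = ∑ b, x (u, b, v) := by
  simp [Matrix.mulVec, dotProduct, inclusionMatrix, omitCoord,
    Fintype.sum_prod_type, Prod.mk.injEq, ite_and]

lemma mv2 (n : ℕ) (x : Fin n × Fin n × Fin n → ℚ) (u v : Fin n) :
    (inclusionMatrix n).mulVec x (2, u, v) = ∑ c, x (u, v, c) := by
  simp only [Matrix.mulVec, dotProduct, inclusionMatrix, omitCoord,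
    Fintype.sum_prod_type]
  norm_num [Prod.mk.injEq, ite_and]
  rw [Finset.sum_comm]
  simp [ite_and]

lemma mem_ker_iff (n : ℕ) (x : Fin n × Fin n × Fin n → ℚ) :
    x ∈ LinearMap.ker (inclusionMatrix n).mulVecLin ↔
      (∀ u v : Fin n, ∑ a, x (a, u, v) = 0) ∧
      (∀ u v : Fin n, ∑ b, x (u, b, v) = 0) ∧
      (∀ u v : Fin n, ∑ c, x (u, v, c) = 0) := by
  rw [LinearMap.mem_ker, Matrix.mulVecLin_apply, funext_iff]
  constructor
  · intro h
    refine ⟨fun u v => ?_, fun u v => ?_, fun u v => ?_⟩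
    · rw [← mv0 n x u v]; exact h (0, u, v)
    · rw [← mv1 n x u v]; exact h (1, u, v)
    · rw [← mv2 n x u v]; exact h (2, u, v)
  · rintro ⟨h0, h1, h2⟩ ⟨c, u, v⟩
    fin_cases c
    · exact (mv0 n x u v).trans (h0 u v)
    · exact (mv1 n x u v).trans (h1 u v)
    · exact (mv2 n x u v).trans (h2 u v)

/-- The `i`-th vector `eVec m i : Fin (m+1) → ℚ` is `indicator i.castSucc - indicator last`. -/
def eVec (m : ℕ) (i : Fin m) (a : Fin (m + 1)) : ℚ :=
  (if a = i.castSucc then 1 else 0) - (if a = Fin.last m then 1 else 0)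

lemma sum_eVec (m : ℕ) (i : Fin m) : ∑ a, eVec m i a = 0 := by
  simp [eVec, Finset.sum_sub_distrib]

lemma eVec_castSucc (m : ℕ) (i j : Fin m) :
    eVec m i j.castSucc = if j = i then 1 else 0 := by
  simp [eVec, Fin.castSucc_inj, (Fin.castSucc_lt_last j).ne]

/-- The extension of `g` to a kernel element. -/
def extFun (m : ℕ) (g : Fin m × Fin m × Fin m → ℚ)
    (p : Fin (m + 1) × Fin (m + 1) × Fin (m + 1)) : ℚ :=
  ∑ q : Fin m × Fin m × Fin m,
    eVec m q.1 p.1 * eVec m q.2.1 p.2.1 * eVec m q.2.2 p.2.2 * g q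

lemma extFun_mem (m : ℕ) (g : Fin m × Fin m × Fin m → ℚ) :
    extFun m g ∈ LinearMap.ker (inclusionMatrix (m + 1)).mulVecLin := by
  rw [mem_ker_iff]
  refine ⟨fun u v => ?_, fun u v => ?_, fun u v => ?_⟩
  · simp only [extFun]
    rw [Finset.sum_comm]
    refine Finset.sum_eq_zero fun q _ => ?_
    have : ∑ a, eVec m q.1 a * eVec m q.2.1 u * eVec m q.2.2 v * g q
        = (∑ a, eVec m q.1 a) * (eVec m q.2.1 u * eVec m q.2.2 v * g q) := by
      rw [Finset.sum_mul]; congr 1; ext a; ring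
    simpa [extFun, sum_eVec] using this
  · simp only [extFun]
    rw [Finset.sum_comm]
    refine Finset.sum_eq_zero fun q _ => ?_
    have : ∑ b, eVec m q.1 u * eVec m q.2.1 b * eVec m q.2.2 v * g q
        = (∑ b, eVec m q.2.1 b) * (eVec m q.1 u * eVec m q.2.2 v * g q) := by
      rw [Finset.sum_mul]; congr 1; ext b; ring
    simpa [extFun, sum_eVec] using this
  · simp only [extFun]
    rw [Finset.sum_comm]
    refine Finset.sum_eq_zero fun q _ => ?_
    have : ∑ c, eVec m q.1 u * eVec m q.2.1 v * eVec m q.2.2 c * g q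
        = (∑ c, eVec m q.2.2 c) * (eVec m q.1 u * eVec m q.2.1 v * g q) := by
      rw [Finset.sum_mul]; congr 1; ext c; ring
    simpa [extFun, sum_eVec] using this

lemma extFun_restrict (m : ℕ) (g : Fin m × Fin m × Fin m → ℚ) (i j k : Fin m) :
    extFun m g (i.castSucc, j.castSucc, k.castSucc) = g (i, j, k) := by
  simp [extFun, Fintype.sum_prod_type, eVec_castSucc, ite_and]

lemma ker_inj (m : ℕ) (f : Fin (m+1) × Fin (m+1) × Fin (m+1) → ℚ)
    (hf : f ∈ LinearMap.ker (inclusionMatrix (m + 1)).mulVecLin)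
    (h : ∀ i j k : Fin m, f (i.castSucc, j.castSucc, k.castSucc) = 0) :
    f = 0 := by
  rw [mem_ker_iff] at hf
  obtain ⟨h0, h1, h2⟩ := hf
  have s1 : ∀ (i j : Fin m) (c : Fin (m+1)), f (i.castSucc, j.castSucc, c) = 0 := by
    intro i j c
    induction c using Fin.lastCases with
    | last =>
      have := h2 i.castSucc j.castSucc
      rw [Fin.sum_univ_castSucc] at this
      simpa [h i j] using this
    | cast k => exact h i j k
  have s2 : ∀ (i : Fin m) (b c : Fin (m+1)), f (i.castSucc, b, c) = 0 := by
    intro i b c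
    induction b using Fin.lastCases with
    | last =>
      have := h1 i.castSucc c
      rw [Fin.sum_univ_castSucc] at this
      simpa [s1 i] using this
    | cast j => exact s1 i j c
  funext p
  obtain ⟨a, b, c⟩ := p
  induction a using Fin.lastCases with
  | last =>
    have := h0 b c
    rw [Fin.sum_univ_castSucc] at this
    simpa [s2] using this
  | cast i => exact s2 i b c

theorem kernel_inclusionMatrix_finrank (n : ℕ) (hn : 1 ≤ n) :
    Module.finrank ℚ (LinearMap.ker (inclusionMatrix n).mulVecLin) = (n - 1) ^ 3 := by
  obtain ⟨m, rfl⟩ : ∃ m, n = m + 1 := ⟨n - 1, (Nat.succ_pred_eq_of_pos hn).symm⟩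
  set V := LinearMap.ker (inclusionMatrix (m + 1)).mulVecLin
  let ρ : (Fin (m+1) × Fin (m+1) × Fin (m+1) → ℚ) →ₗ[ℚ] (Fin m × Fin m × Fin m → ℚ) :=
    LinearMap.funLeft ℚ ℚ (fun p => (p.1.castSucc, p.2.1.castSucc, p.2.2.castSucc))
  let φ : V →ₗ[ℚ] (Fin m × Fin m × Fin m → ℚ) := ρ.comp V.subtype
  have hinj : Function.Injective φ := by
    intro f g hfg
    apply Subtype.ext
    have : ((f : Fin (m+1) × Fin (m+1) × Fin (m+1) → ℚ) - (g : Fin (m+1) × Fin (m+1) × Fin (m+1) → ℚ)) = 0 := by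
      apply ker_inj m _ (V.sub_mem f.2 g.2)
      intro i j k
      have := congrFun hfg (i, j, k)
      simp only [φ, ρ, LinearMap.comp_apply, LinearMap.funLeft_apply,
        Submodule.subtype_apply] at this
      simp [Pi.sub_apply, this]
    exact sub_eq_zero.mp this
  have hsurj : Function.Surjective φ := by
    intro g
    refine ⟨⟨extFun m g, extFun_mem m g⟩, ?_⟩
    funext q
    obtain ⟨i, j, k⟩ := q
    simpa [φ, ρ] using extFun_restrict m g i j k
  have e := LinearEquiv.ofBijective φ ⟨hinj, hsurj⟩
  rw [e.finrank_eq]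
  simp [Module.finrank_fintype_fun_eq_card]
  ring
end

section
/- For every natural number n ≥ 1, the family of (n−1)³ intercalate vectors v_{ijk}, indexed by i,j,k ∈ {1,…,n−1}, is linearly independent over ℚ. -/
/-- The intercalate vector `v_{ijk}` for `i,j,k` (intended to be nonzero elements of `Fin n`):
it takes value `+1` on the triples `(0,0,0), (0,j,k), (i,0,k), (i,j,0)`,
value `-1` on the triples `(0,0,k), (0,j,0), (i,0,0), (i,j,k)`, and `0` elsewhere. -/
def intercalate (n : ℕ) [NeZero n] (i j k : Fin n) : (Fin n × Fin n × Fin n) → ℚ :=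
  fun x =>
    (if x = ((0 : Fin n), (0 : Fin n), (0 : Fin n)) then 1 else 0)
    + (if x = ((0 : Fin n), j, k) then 1 else 0)
    + (if x = (i, (0 : Fin n), k) then 1 else 0)
    + (if x = (i, j, (0 : Fin n)) then 1 else 0)
    - (if x = ((0 : Fin n), (0 : Fin n), k) then 1 else 0)
    - (if x = ((0 : Fin n), j, (0 : Fin n)) then 1 else 0)
    - (if x = (i, (0 : Fin n), (0 : Fin n)) then 1 else 0)
    - (if x = (i, j, k) then 1 else 0)

theorem intercalates_linearIndependent (n : ℕ) [NeZero n] :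
    LinearIndependent ℚ
      (fun p : {i : Fin n // i ≠ 0} × {j : Fin n // j ≠ 0} × {k : Fin n // k ≠ 0} =>
        intercalate n p.1.1 p.2.1.1 p.2.2.1) := by
  rw [Fintype.linearIndependent_iff]
  intro g hg p
  have h := congrFun hg (p.1.1, p.2.1.1, p.2.2.1)
  have hsum : ∀ q : {i : Fin n // i ≠ 0} × {j : Fin n // j ≠ 0} × {k : Fin n // k ≠ 0},
      g q • intercalate n q.1.1 q.2.1.1 q.2.2.1 (p.1.1, p.2.1.1, p.2.2.1)
        = if q = p then -g q else 0 := by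
    intro q
    have hi := p.1.2
    have hj := p.2.1.2
    have hk := p.2.2.2
    by_cases hqp : q = p
    · subst hqp
      simp [intercalate, Prod.ext_iff, hi, hj, hk, Ne.symm hi, Ne.symm hj, Ne.symm hk]
    · have hne : ¬ (q.1.1 = p.1.1 ∧ q.2.1.1 = p.2.1.1 ∧ q.2.2.1 = p.2.2.1) := by
        intro ⟨h1, h2, h3⟩
        exact hqp (Prod.ext (Subtype.ext h1) (Prod.ext (Subtype.ext h2) (Subtype.ext h3)))
      simp only [intercalate, Prod.mk.injEq, smul_eq_mul]
      rw [if_neg (by tauto), if_neg (by tauto), if_neg (by tauto), if_neg (by tauto),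
        if_neg (by tauto), if_neg (by tauto), if_neg (by tauto), if_neg (by tauto)]
      simp [hqp]
  rw [Finset.sum_apply] at h
  simp only [Pi.smul_apply, Pi.zero_apply] at h
  simp only [hsum] at h
  rw [Finset.sum_ite_eq' Finset.univ p (fun q => -g q)] at h
  simpa using h
end

section
/- For every natural number n ≥ 1 and all i,j,k ∈ {1,…,n−1}, the intercalate vector v_{ijk} lies in the kernel of the inclusion matrix M(n), i.e. M(n)·v_{ijk} = 0. -/
theorem intercalate_mem_ker (n : ℕ) [NeZero n] (i j k : Fin n)
    (hi : i ≠ 0) (hj : j ≠ 0) (hk : k ≠ 0) :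
    (inclusionMatrix n).mulVec (intercalate n i j k) = 0 := by
  funext r
  obtain ⟨c, u, v⟩ := r
  simp only [Matrix.mulVec, dotProduct, inclusionMatrix, intercalate,
    mul_add, mul_sub, mul_ite, mul_one, mul_zero,
    Finset.sum_add_distrib, Finset.sum_sub_distrib, Finset.sum_ite_eq',
    Finset.mem_univ, if_true, Pi.zero_apply]
  fin_cases c <;>
    simp only [omitCoord, if_true, if_false, Fin.isValue, reduceIte, Prod.mk.injEq] <;>
    by_cases h1 : u = 0 <;> by_cases h2 : v = 0 <;>
    (subst_eqs; simp_all; try ring_nf)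
end

section
/- For every latin trade (P,Q) of order n, the signed frequency vector of (P,Q) is an integer linear combination of the intercalate vectors v_{ijk}, i,j,k ∈ {1,…,n−1}; that is, there exist integers c_{ijk} such that T = Σ_{i,j,k=1}^{n−1} c_{ijk} · v_{ijk}. -/
/-- A partial latin square of order `n`. -/
def IsPartialLatinSquare (n : ℕ) (P : Finset (Fin n × Fin n × Fin n)) : Prop :=
  ∀ a ∈ P, ∀ b ∈ P, a ≠ b →
    (a.1, a.2.1) ≠ (b.1, b.2.1) ∧ (a.1, a.2.2) ≠ (b.1, b.2.2) ∧
      (a.2.1, a.2.2) ≠ (b.2.1, b.2.2)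

/-- A latin trade `(P,Q)` of order `n`. -/
def IsLatinTrade (n : ℕ) (P Q : Finset (Fin n × Fin n × Fin n)) : Prop :=
  IsPartialLatinSquare n P ∧ IsPartialLatinSquare n Q ∧
  (∀ i j : Fin n, (∃ k, (i, j, k) ∈ P) ↔ (∃ k, (i, j, k) ∈ Q)) ∧
  (∀ i j k k' : Fin n, (i, j, k) ∈ P → (i, j, k') ∈ Q → k ≠ k') ∧
  (∀ r k : Fin n, (∃ j, (r, j, k) ∈ P) ↔ (∃ j, (r, j, k) ∈ Q)) ∧
  (∀ c k : Fin n, (∃ i, (i, c, k) ∈ P) ↔ (∃ i, (i, c, k) ∈ Q))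

/-- The signed frequency vector of a pair `(P,Q)`: `1` on `P`, `-1` on `Q`, `0` elsewhere. -/
def freqVec (n : ℕ) (P Q : Finset (Fin n × Fin n × Fin n)) :
    (Fin n × Fin n × Fin n) → ℚ :=
  fun x => if x ∈ P then 1 else if x ∈ Q then -1 else 0

/- ### Auxiliary lemmas -/

private lemma sum_ite_unique {n : ℕ} {p q : Fin n → Prop} [DecidablePred p] [DecidablePred q]
    (hp : ∀ a b, p a → p b → a = b) (hq : ∀ a b, q a → q b → a = b)
    (hpq : (∃ k, p k) ↔ (∃ k, q k)) :
    ∑ k, (if p k then (1 : ℚ) else 0) = ∑ k, (if q k then (1 : ℚ) else 0) := by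
  rw [Finset.sum_boole, Finset.sum_boole]
  congr 1
  have h1 : (Finset.univ.filter p).card ≤ 1 :=
    Finset.card_le_one.2 (fun a ha b hb => hp a b (by simpa using ha) (by simpa using hb))
  have h2 : (Finset.univ.filter q).card ≤ 1 :=
    Finset.card_le_one.2 (fun a ha b hb => hq a b (by simpa using ha) (by simpa using hb))
  have h3 : (Finset.univ.filter p).Nonempty ↔ (Finset.univ.filter q).Nonempty := by
    simp only [Finset.filter_nonempty_iff, Finset.mem_univ, true_and]
    exact hpq
  rcases Nat.eq_zero_or_pos (Finset.univ.filter p).card with h | h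
  · have : ¬ (Finset.univ.filter q).Nonempty := by
      rw [← h3]; simp [Finset.nonempty_iff_ne_empty, ← Finset.card_eq_zero, h]
    rw [h, Finset.not_nonempty_iff_eq_empty.1 this]; simp
  · have hp1 : (Finset.univ.filter p).card = 1 := le_antisymm h1 h
    have : (Finset.univ.filter q).Nonempty := h3.1 (Finset.card_pos.1 h)
    have hq1 : (Finset.univ.filter q).card = 1 := le_antisymm h2 (Finset.card_pos.2 this)
    rw [hp1, hq1]

private lemma sum_subtype_ne {n : ℕ} [NeZero n] (g : Fin n → ℚ) (h0 : g 0 = 0) :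
    ∑ i : {i : Fin n // i ≠ 0}, g i.1 = ∑ i, g i := by
  rw [← Finset.sum_subtype (Finset.univ.filter (· ≠ 0)) (by simp) g]
  exact Finset.sum_filter_of_ne (fun x _ hgx => by rintro rfl; exact hgx h0)

private lemma ite3 {p q r : Prop} [Decidable p] [Decidable q] [Decidable r] :
    (if (p ∧ q ∧ r) then (1:ℚ) else 0) =
      (if p then (1:ℚ) else 0) * (if q then (1:ℚ) else 0) * (if r then (1:ℚ) else 0) := by
  split_ifs <;> simp_all

private lemma intercalate_eq {n : ℕ} [NeZero n] (i j k : Fin n) (x : Fin n × Fin n × Fin n) :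
    intercalate n i j k x =
      -(((if x.1 = i then (1:ℚ) else 0) - if x.1 = 0 then 1 else 0) *
        ((((if x.2.1 = j then (1:ℚ) else 0) - if x.2.1 = 0 then 1 else 0)) *
         ((if x.2.2 = k then (1:ℚ) else 0) - if x.2.2 = 0 then 1 else 0))) := by
  obtain ⟨a, b, c⟩ := x
  simp only [intercalate, Prod.mk.injEq, ite3]
  ring

private lemma triple_sum {n : ℕ} [NeZero n] (T : Fin n × Fin n × Fin n → ℚ)
    (h1 : ∀ i j, ∑ k, T (i, j, k) = 0)
    (h2 : ∀ i k, ∑ j, T (i, j, k) = 0)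
    (h3 : ∀ j k, ∑ i, T (i, j, k) = 0)
    (a b c : Fin n) :
    ∑ i, ∑ j, ∑ k, T (i, j, k) *
      (((if a = i then (1:ℚ) else 0) - if a = 0 then 1 else 0) *
       ((((if b = j then (1:ℚ) else 0) - if b = 0 then 1 else 0)) *
        ((if c = k then (1:ℚ) else 0) - if c = 0 then 1 else 0))) = T (a, b, c) := by
  have hk : ∀ (f : Fin n → ℚ), ∑ l, f l = 0 → ∀ d : Fin n,
      ∑ l, f l * ((if d = l then (1:ℚ) else 0) - if d = 0 then 1 else 0) = f d := by
    intro f hf d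
    simp only [mul_sub, Finset.sum_sub_distrib, mul_ite, mul_one, mul_zero]
    rw [Finset.sum_ite_eq]
    simp [Finset.sum_ite_irrel, hf]
  have step1 : ∀ i j, ∑ k, T (i, j, k) *
      (((if a = i then (1:ℚ) else 0) - if a = 0 then 1 else 0) *
       ((((if b = j then (1:ℚ) else 0) - if b = 0 then 1 else 0)) *
        ((if c = k then (1:ℚ) else 0) - if c = 0 then 1 else 0))) =
      T (i, j, c) * ((((if a = i then (1:ℚ) else 0) - if a = 0 then 1 else 0) *
       ((if b = j then (1:ℚ) else 0) - if b = 0 then 1 else 0))) := by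
    intro i j
    have hf : ∑ k, T (i, j, k) * ((((if a = i then (1:ℚ) else 0) - if a = 0 then 1 else 0) *
       ((if b = j then (1:ℚ) else 0) - if b = 0 then 1 else 0))) = 0 := by
      rw [← Finset.sum_mul, h1 i j, zero_mul]
    calc ∑ k, T (i, j, k) *
      (((if a = i then (1:ℚ) else 0) - if a = 0 then 1 else 0) *
       ((((if b = j then (1:ℚ) else 0) - if b = 0 then 1 else 0)) *
        ((if c = k then (1:ℚ) else 0) - if c = 0 then 1 else 0)))
        = ∑ k, (T (i, j, k) * ((((if a = i then (1:ℚ) else 0) - if a = 0 then 1 else 0) *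
            ((if b = j then (1:ℚ) else 0) - if b = 0 then 1 else 0)))) *
            ((if c = k then (1:ℚ) else 0) - if c = 0 then 1 else 0) :=
          Finset.sum_congr rfl (fun k _ => by ring)
      _ = _ := hk _ hf c
  simp_rw [step1]
  have step2 : ∀ i, ∑ j, T (i, j, c) *
      ((((if a = i then (1:ℚ) else 0) - if a = 0 then 1 else 0) *
       ((if b = j then (1:ℚ) else 0) - if b = 0 then 1 else 0))) =
      T (i, b, c) * (((if a = i then (1:ℚ) else 0) - if a = 0 then 1 else 0)) := by
    intro i
    have hf : ∑ j, T (i, j, c) * (((if a = i then (1:ℚ) else 0) - if a = 0 then 1 else 0)) = 0 := by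
      rw [← Finset.sum_mul, h2 i c, zero_mul]
    calc ∑ j, T (i, j, c) *
      ((((if a = i then (1:ℚ) else 0) - if a = 0 then 1 else 0) *
       ((if b = j then (1:ℚ) else 0) - if b = 0 then 1 else 0)))
        = ∑ j, (T (i, j, c) * (((if a = i then (1:ℚ) else 0) - if a = 0 then 1 else 0))) *
            ((if b = j then (1:ℚ) else 0) - if b = 0 then 1 else 0) :=
          Finset.sum_congr rfl (fun j _ => by ring)
      _ = _ := hk _ hf b
  simp_rw [step2]
  exact hk (fun i => T (i, b, c)) (h3 b c) a

private lemma subtype_triple_sum {n : ℕ} [NeZero n] (f : Fin n → Fin n → Fin n → ℚ)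
    (hi : ∀ j k, f 0 j k = 0) (hj : ∀ i k, f i 0 k = 0) (hk0 : ∀ i j, f i j 0 = 0) :
    ∑ p : {i : Fin n // i ≠ 0} × {j : Fin n // j ≠ 0} × {k : Fin n // k ≠ 0},
        f p.1.1 p.2.1.1 p.2.2.1
      = ∑ i, ∑ j, ∑ k, f i j k := by
  calc ∑ p : {i : Fin n // i ≠ 0} × {j : Fin n // j ≠ 0} × {k : Fin n // k ≠ 0},
        f p.1.1 p.2.1.1 p.2.2.1
      = ∑ i : {i : Fin n // i ≠ 0}, ∑ j : {j : Fin n // j ≠ 0}, ∑ k : {k : Fin n // k ≠ 0},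
          f i.1 j.1 k.1 := by
        rw [Fintype.sum_prod_type]
        exact Finset.sum_congr rfl (fun i _ => by rw [Fintype.sum_prod_type])
    _ = ∑ i : {i : Fin n // i ≠ 0}, ∑ j : {j : Fin n // j ≠ 0}, ∑ k, f i.1 j.1 k :=
        Finset.sum_congr rfl (fun i _ => Finset.sum_congr rfl
          (fun j _ => sum_subtype_ne _ (hk0 _ _)))
    _ = ∑ i : {i : Fin n // i ≠ 0}, ∑ j, ∑ k, f i.1 j k :=
        Finset.sum_congr rfl (fun i _ => sum_subtype_ne (fun j => ∑ k, f i.1 j k)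
          (Finset.sum_eq_zero (fun k _ => hj _ _)))
    _ = ∑ i, ∑ j, ∑ k, f i j k :=
        sum_subtype_ne (fun i => ∑ j, ∑ k, f i j k)
          (Finset.sum_eq_zero (fun j _ => Finset.sum_eq_zero (fun k _ => hi _ _)))

/-- Every latin trade is an integer linear combination of intercalates. -/
theorem latinTrade_eq_sum_intercalates (n : ℕ) [NeZero n]
    (P Q : Finset (Fin n × Fin n × Fin n)) (h : IsLatinTrade n P Q) :
    ∃ c : {i : Fin n // i ≠ 0} × {j : Fin n // j ≠ 0} × {k : Fin n // k ≠ 0} → ℤ,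
      freqVec n P Q =
        ∑ p : {i : Fin n // i ≠ 0} × {j : Fin n // j ≠ 0} × {k : Fin n // k ≠ 0},
          (c p : ℚ) • intercalate n p.1.1 p.2.1.1 p.2.2.1 := by
  obtain ⟨hP, hQ, hcell, hdiff, hrow, hcol⟩ := h
  have hTsub : ∀ x, freqVec n P Q x = (if x ∈ P then (1:ℚ) else 0) - (if x ∈ Q then 1 else 0) := by
    intro x
    have hd : x ∈ P → x ∈ Q → False := fun hp hq => hdiff x.1 x.2.1 x.2.2 x.2.2 hp hq rfl
    by_cases hp : x ∈ P
    · by_cases hq : x ∈ Q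
      · exact (hd hp hq).elim
      · simp [freqVec, hp, hq]
    · simp only [freqVec, hp, if_false, if_neg hp]
      split_ifs <;> norm_num
  have lineK : ∀ i j : Fin n, ∑ k, freqVec n P Q (i, j, k) = 0 := by
    intro i j
    simp_rw [hTsub, Finset.sum_sub_distrib]
    rw [sum_ite_unique (p := fun k => (i, j, k) ∈ P) (q := fun k => (i, j, k) ∈ Q)
      ?_ ?_ (hcell i j), sub_self]
    · intro a b ha hb
      by_contra hab
      exact (hP _ ha _ hb (fun he => hab (by simpa using he))).1 rfl
    · intro a b ha hb
      by_contra hab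
      exact (hQ _ ha _ hb (fun he => hab (by simpa using he))).1 rfl
  have lineJ : ∀ i k : Fin n, ∑ j, freqVec n P Q (i, j, k) = 0 := by
    intro i k
    simp_rw [hTsub, Finset.sum_sub_distrib]
    rw [sum_ite_unique (p := fun j => (i, j, k) ∈ P) (q := fun j => (i, j, k) ∈ Q)
      ?_ ?_ (hrow i k), sub_self]
    · intro a b ha hb
      by_contra hab
      exact (hP _ ha _ hb (fun he => hab (by simpa using he))).2.1 rfl
    · intro a b ha hb
      by_contra hab
      exact (hQ _ ha _ hb (fun he => hab (by simpa using he))).2.1 rfl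
  have lineI : ∀ j k : Fin n, ∑ i, freqVec n P Q (i, j, k) = 0 := by
    intro j k
    simp_rw [hTsub, Finset.sum_sub_distrib]
    rw [sum_ite_unique (p := fun i => (i, j, k) ∈ P) (q := fun i => (i, j, k) ∈ Q)
      ?_ ?_ (hcol j k), sub_self]
    · intro a b ha hb
      by_contra hab
      exact (hP _ ha _ hb (fun he => hab (by simpa using he))).2.2 rfl
    · intro a b ha hb
      by_contra hab
      exact (hQ _ ha _ hb (fun he => hab (by simpa using he))).2.2 rfl
  refine ⟨fun p => -(if (p.1.1, p.2.1.1, p.2.2.1) ∈ P then (1:ℤ)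
    else if (p.1.1, p.2.1.1, p.2.2.1) ∈ Q then -1 else 0), ?_⟩
  funext x
  obtain ⟨a, b, c⟩ := x
  have hc : ∀ y : Fin n × Fin n × Fin n,
      ((-(if y ∈ P then (1:ℤ) else if y ∈ Q then -1 else 0) : ℤ) : ℚ) = -(freqVec n P Q y) := by
    intro y; simp only [freqVec]; split_ifs <;> norm_num
  symm
  rw [Finset.sum_apply]
  calc ∑ p : {i : Fin n // i ≠ 0} × {j : Fin n // j ≠ 0} × {k : Fin n // k ≠ 0},
      ((-(if (p.1.1, p.2.1.1, p.2.2.1) ∈ P then (1:ℤ)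
        else if (p.1.1, p.2.1.1, p.2.2.1) ∈ Q then -1 else 0) : ℤ) : ℚ) •
        intercalate n p.1.1 p.2.1.1 p.2.2.1 (a, b, c)
      = ∑ p : {i : Fin n // i ≠ 0} × {j : Fin n // j ≠ 0} × {k : Fin n // k ≠ 0},
          freqVec n P Q (p.1.1, p.2.1.1, p.2.2.1) *
            (((if a = p.1.1 then (1:ℚ) else 0) - if a = 0 then 1 else 0) *
             ((((if b = p.2.1.1 then (1:ℚ) else 0) - if b = 0 then 1 else 0)) *
              ((if c = p.2.2.1 then (1:ℚ) else 0) - if c = 0 then 1 else 0))) := by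
        refine Finset.sum_congr rfl (fun p _ => ?_)
        rw [smul_eq_mul, hc, intercalate_eq]
        ring
    _ = ∑ i, ∑ j, ∑ k, freqVec n P Q (i, j, k) *
            (((if a = i then (1:ℚ) else 0) - if a = 0 then 1 else 0) *
             ((((if b = j then (1:ℚ) else 0) - if b = 0 then 1 else 0)) *
              ((if c = k then (1:ℚ) else 0) - if c = 0 then 1 else 0))) := by
        refine subtype_triple_sum (fun i j k => freqVec n P Q (i, j, k) *
            (((if a = i then (1:ℚ) else 0) - if a = 0 then 1 else 0) *
             ((((if b = j then (1:ℚ) else 0) - if b = 0 then 1 else 0)) *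
              ((if c = k then (1:ℚ) else 0) - if c = 0 then 1 else 0))))
          ?_ ?_ ?_ <;> intro u v <;> simp [sub_self]
    _ = freqVec n P Q (a, b, c) := triple_sum (freqVec n P Q) lineK lineJ lineI a b c
end

section
/- For every natural number n ≥ 1, there exists a 4-cycle system of order n if and only if n ≡ 1 (mod 8). -/
/-- The edge set `{ab, bc, cd, da}` of the 4-cycle `(a,b,c,d)` in the complete graph. -/
def cycleEdges (n : ℕ) (a b c d : Fin n) : Finset (Sym2 (Fin n)) :=
  {s(a, b), s(b, c), s(c, d), s(d, a)}

/-- A 4-cycle in `K_n`: a set of four edges `{ab, bc, cd, da}` for four distinct vertices. -/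
def IsFourCycle (n : ℕ) (C : Finset (Sym2 (Fin n))) : Prop :=
  ∃ a b c d : Fin n, [a, b, c, d].Nodup ∧ C = cycleEdges n a b c d

/-- A 4-cycle system of order `n`: a collection of 4-cycles of `K_n` whose edge sets
partition the edge set of `K_n`, i.e. every edge of `K_n` belongs to exactly one member. -/
def IsFourCycleSystem (n : ℕ) (S : Finset (Finset (Sym2 (Fin n)))) : Prop :=
  (∀ C ∈ S, IsFourCycle n C) ∧
  ∀ u v : Fin n, u ≠ v → ∃! C, C ∈ S ∧ s(u, v) ∈ C

/-- base cycle j translated by t : vertices t, t+(2j+1), t+(4k+1), t+(2j+2) -/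
def base (k j : ℕ) (t : ZMod (8*k+1)) : Finset (Sym2 (ZMod (8*k+1))) :=
  {s(t, t + ((2*j+1 : ℕ) : ZMod (8*k+1))),
   s(t + ((2*j+1 : ℕ) : ZMod (8*k+1)), t + ((4*k+1 : ℕ) : ZMod (8*k+1))),
   s(t + ((4*k+1 : ℕ) : ZMod (8*k+1)), t + ((2*j+2 : ℕ) : ZMod (8*k+1))),
   s(t + ((2*j+2 : ℕ) : ZMod (8*k+1)), t)}

lemma cast_ne (k a b : ℕ) (ha : a < 8*k+1) (hb : b < 8*k+1) (hab : a ≠ b) :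
    ((a : ZMod (8*k+1)) ≠ (b : ZMod (8*k+1))) := fun h => hab (by
  have := congrArg ZMod.val h
  rwa [ZMod.val_cast_of_lt ha, ZMod.val_cast_of_lt hb] at this)

lemma base_nodup (k j : ℕ) (hj : j < k) (t : ZMod (8*k+1)) :
    [t, t + ((2*j+1 : ℕ) : ZMod (8*k+1)), t + ((4*k+1 : ℕ) : ZMod (8*k+1)),
      t + ((2*j+2 : ℕ) : ZMod (8*k+1))].Nodup := by
  have h0 : ∀ a b : ℕ, a < 8*k+1 → b < 8*k+1 → a ≠ b →
      t + ((a:ℕ) : ZMod (8*k+1)) ≠ t + ((b:ℕ) : ZMod (8*k+1)) := by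
    intro a b ha hb hab h
    exact cast_ne k a b ha hb hab (by exact add_left_cancel h)
  have h1 : ∀ b : ℕ, b < 8*k+1 → b ≠ 0 → t ≠ t + ((b:ℕ) : ZMod (8*k+1)) := by
    intro b hb hb0
    have := h0 0 b (by omega) hb (by omega)
    simpa using this
  have g1 := h1 (2*j+1) (by omega) (by omega)
  have g2 := h1 (4*k+1) (by omega) (by omega)
  have g3 := h1 (2*j+2) (by omega) (by omega)
  have g4 := h0 (2*j+1) (4*k+1) (by omega) (by omega) (by omega)
  have g5 := h0 (2*j+1) (2*j+2) (by omega) (by omega) (by omega)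
  have g6 := h0 (4*k+1) (2*j+2) (by omega) (by omega) (by omega)
  simp only [List.nodup_cons, List.mem_cons, List.mem_singleton, List.not_mem_nil, or_false,
    not_or, List.nodup_nil, and_true]
  exact ⟨⟨g1, g2, g3⟩, ⟨g4, g5⟩, g6, not_false⟩

lemma cover (k : ℕ) (u v : ZMod (8*k+1)) (h1 : 1 ≤ (v-u).val) (h2 : (v-u).val ≤ 4*k) :
    ∃ j < k, ∃ t, s(u,v) ∈ base k j t := by
  set d := (v - u).val with hd
  have hv : v = u + ((d : ℕ) : ZMod (8*k+1)) := by
    have : ((d : ℕ) : ZMod (8*k+1)) = v - u := ZMod.natCast_rightInverse (n := 8*k+1) _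
    rw [this]; ring
  rcases Nat.mod_two_eq_zero_or_one d with he | ho
  · rcases le_or_gt d (2*k) with hle | hgt
    ·
      refine ⟨d/2 - 1, by omega, u, ?_⟩
      have hdj : 2*(d/2-1)+2 = d := by omega
      simp only [base, Finset.mem_insert, Finset.mem_singleton]
      right; right; right
      rw [hdj, ← hv, Sym2.eq_swap]
    · -- d even, d > 2k : j = (4k-d)/2, edge 2
      refine ⟨(4*k-d)/2, by omega, u - ((2*((4*k-d)/2)+1 : ℕ) : ZMod (8*k+1)), ?_⟩
      set j := (4*k-d)/2 with hj
      have hnat : (2*j+1) + d = 4*k+1 := by omega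
      have hcast : ((2*j+1 : ℕ) : ZMod (8*k+1)) + ((d:ℕ) : ZMod (8*k+1))
          = ((4*k+1 : ℕ) : ZMod (8*k+1)) := by exact_mod_cast congrArg (Nat.cast) hnat
      simp only [base, Finset.mem_insert, Finset.mem_singleton]
      right; left
      have e1 : u - ((2*j+1 : ℕ) : ZMod (8*k+1)) + ((2*j+1 : ℕ) : ZMod (8*k+1)) = u := by ring
      have e2 : u - ((2*j+1 : ℕ) : ZMod (8*k+1)) + ((4*k+1 : ℕ) : ZMod (8*k+1)) = v := by
        rw [← hcast, hv]; ring
      rw [e1, e2]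
  · rcases le_or_gt d (2*k) with hle | hgt
    · -- d odd, d ≤ 2k : j = d/2, edge 1
      refine ⟨d/2, by omega, u, ?_⟩
      have hdj : 2*(d/2)+1 = d := by omega
      simp only [base, Finset.mem_insert, Finset.mem_singleton]
      left
      rw [hdj, ← hv]
    · -- d odd, d > 2k : j = (4k-1-d)/2, edge 3
      refine ⟨(4*k-1-d)/2, by omega, u - ((2*((4*k-1-d)/2)+2 : ℕ) : ZMod (8*k+1)), ?_⟩
      set j := (4*k-1-d)/2 with hj
      have hnat : (2*j+2) + d = 4*k+1 := by omega
      have hcast : ((2*j+2 : ℕ) : ZMod (8*k+1)) + ((d:ℕ) : ZMod (8*k+1))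
          = ((4*k+1 : ℕ) : ZMod (8*k+1)) := by exact_mod_cast congrArg (Nat.cast) hnat
      simp only [base, Finset.mem_insert, Finset.mem_singleton]
      right; right; left
      have e1 : u - ((2*j+2 : ℕ) : ZMod (8*k+1)) + ((2*j+2 : ℕ) : ZMod (8*k+1)) = u := by ring
      have e2 : u - ((2*j+2 : ℕ) : ZMod (8*k+1)) + ((4*k+1 : ℕ) : ZMod (8*k+1)) = v := by
        rw [← hcast, hv]; ring
      rw [e1, e2, Sym2.eq_swap]

lemma cover_all (k : ℕ) (u v : ZMod (8*k+1)) (huv : u ≠ v) :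
    ∃ j < k, ∃ t, s(u,v) ∈ base k j t := by
  have hne : v - u ≠ 0 := sub_ne_zero.mpr (Ne.symm huv)
  have hpos : 1 ≤ (v-u).val := by
    rcases Nat.eq_zero_or_pos (v-u).val with h | h
    · exact absurd ((ZMod.val_eq_zero _).mp h) hne
    · exact h
  have hlt : (v-u).val < 8*k+1 := ZMod.val_lt _
  rcases le_or_gt (v-u).val (4*k) with h | h
  · exact cover k u v hpos h
  · have hne' : u - v ≠ 0 := sub_ne_zero.mpr huv
    have hkey : (u - v) = -(v - u) := by ring
    have hval : (u - v).val = 8*k+1 - (v-u).val := by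
      rw [hkey, ZMod.neg_val]
      simp [hne]
    obtain ⟨j, hj, t, ht⟩ := cover k v u (by omega) (by omega)
    exact ⟨j, hj, t, by rwa [Sym2.eq_swap]⟩

lemma card_four_le {α : Type*} [DecidableEq α] (a b c d : α) :
    ({a, b, c, d} : Finset α).card ≤ 4 := by
  apply le_trans (Finset.card_insert_le _ _)
  have := Finset.card_insert_le b ({c, d} : Finset α)
  have := Finset.card_insert_le c ({d} : Finset α)
  simp at *
  omega

lemma E_card (n : ℕ) [NeZero n] :
    ((Finset.univ : Finset (Sym2 (ZMod n))).filter (fun e => ¬ e.IsDiag)).card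
      = n * (n-1) / 2 := by
  have h1 : ((Finset.univ : Finset (Sym2 (ZMod n))).filter (fun e => ¬ e.IsDiag)).card
      = Fintype.card {e : Sym2 (ZMod n) // ¬ e.IsDiag} := (Fintype.card_subtype _).symm
  rw [h1, Sym2.card_subtype_not_diag, ZMod.card, Nat.choose_two_right]

lemma construction' (k : ℕ) :
    ∃ S : Finset (Finset (Sym2 (ZMod (8*k+1)))),
      (∀ C ∈ S, ∃ a b c d : ZMod (8*k+1), [a,b,c,d].Nodup ∧
        C = ({s(a,b),s(b,c),s(c,d),s(d,a)} : Finset (Sym2 (ZMod (8*k+1))))) ∧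
      (∀ u v : ZMod (8*k+1), u ≠ v → ∃! C, C ∈ S ∧ s(u,v) ∈ C) := by
  let S := ((Finset.range k) ×ˢ (Finset.univ : Finset (ZMod (8*k+1)))).image
    (fun p => base k p.1 p.2)
  have hS : S = ((Finset.range k) ×ˢ (Finset.univ : Finset (ZMod (8*k+1)))).image
    (fun p => base k p.1 p.2) := rfl
  have hmem : ∀ j < k, ∀ t, base k j t ∈ S := by
    intro j hj t
    rw [hS, Finset.mem_image]
    exact ⟨(j, t), by simp [hj], rfl⟩
  refine ⟨S, ?_, ?_⟩
  · intro C hC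
    obtain ⟨⟨j, t⟩, hp, rfl⟩ := Finset.mem_image.mp hC
    have hj : j < k := by
      have := (Finset.mem_product.mp hp).1; simpa using this
    exact ⟨t, t + ((2*j+1 : ℕ) : ZMod (8*k+1)), t + ((4*k+1 : ℕ) : ZMod (8*k+1)),
      t + ((2*j+2 : ℕ) : ZMod (8*k+1)), base_nodup k j hj t, rfl⟩
  · intro u v huv
    obtain ⟨j, hj, t, ht⟩ := cover_all k u v huv
    refine ⟨base k j t, ⟨hmem j hj t, ht⟩, ?_⟩
    -- uniqueness by counting
    rintro C ⟨hC, heC⟩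
    by_contra hne
    set E := ((Finset.univ : Finset (Sym2 (ZMod (8*k+1)))).filter (fun e => ¬ e.IsDiag))
      with hE
    have hEcard : E.card = 4 * (k * (8*k+1)) := by
      rw [E_card]
      have h : (8*k+1) * (8*k+1-1) = 2 * (4 * (k * (8*k+1))) := by
        rw [Nat.add_sub_cancel]; ring
      omega
    -- coverage
    have hcov : E ⊆ S.biUnion id := by
      intro e he
      induction e with
      | h x y =>
        simp only [hE, Finset.mem_filter, Sym2.isDiag_iff_proj_eq] at he
        obtain ⟨j', hj', t', ht'⟩ := cover_all k x y he.2
        exact Finset.mem_biUnion.mpr ⟨base k j' t', hmem j' hj' t', ht'⟩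
    -- cards
    have hCle : ∀ D ∈ S, D.card ≤ 4 := by
      intro D hD
      obtain ⟨⟨j', t'⟩, _, rfl⟩ := Finset.mem_image.mp hD
      exact card_four_le _ _ _ _
    have hScard : S.card ≤ k * (8*k+1) := by
      refine le_trans (Finset.card_image_le) ?_
      rw [Finset.card_product, Finset.card_range, Finset.card_univ, ZMod.card]
    -- split off C
    have hCS : C ∈ S := hC
    have hsplit : S.biUnion id = C ∪ (S.erase C).biUnion id := by
      conv_lhs => rw [← Finset.insert_erase hCS]
      rw [Finset.biUnion_insert]; rfl
    have hmem2 : s(u,v) ∈ (S.erase C).biUnion id := by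
      refine Finset.mem_biUnion.mpr ⟨base k j t, ?_, ht⟩
      exact Finset.mem_erase.mpr ⟨fun h => hne h.symm, hmem j hj t⟩
    have hsub : S.biUnion id ⊆ (C.erase s(u,v)) ∪ (S.erase C).biUnion id := by
      rw [hsplit]
      intro x hx
      rcases Finset.mem_union.mp hx with h | h
      · by_cases hx2 : x = s(u,v)
        · exact Finset.mem_union_right _ (hx2 ▸ hmem2)
        · exact Finset.mem_union_left _ (Finset.mem_erase.mpr ⟨hx2, h⟩)
      · exact Finset.mem_union_right _ h
    have hb1 : E.card ≤ ((C.erase s(u,v)) ∪ (S.erase C).biUnion id).card :=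
      Finset.card_le_card (hcov.trans hsub)
    have hb2 : ((C.erase s(u,v)) ∪ (S.erase C).biUnion id).card
        ≤ (C.erase s(u,v)).card + ((S.erase C).biUnion id).card := Finset.card_union_le _ _
    have hb3 : (C.erase s(u,v)).card ≤ 3 := by
      rw [Finset.card_erase_of_mem heC]
      have := hCle C hCS
      omega
    have hb4 : ((S.erase C).biUnion id).card ≤ ∑ D ∈ S.erase C, D.card := by
      apply Finset.card_biUnion_le
    have hb5 : ∑ D ∈ S.erase C, D.card ≤ 4 * (S.erase C).card := by
      have := Finset.sum_le_card_nsmul (S.erase C) (fun D => D.card) 4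
        (fun D hD => hCle D (Finset.mem_of_mem_erase hD))
      simpa [mul_comm] using this
    have hb6 : (S.erase C).card = S.card - 1 := Finset.card_erase_of_mem hCS
    have hS1 : 1 ≤ S.card := Finset.card_pos.mpr ⟨C, hCS⟩
    omega

lemma E_card' (V : Type*) [Fintype V] [DecidableEq V] :
    ((Finset.univ : Finset (Sym2 V)).filter (fun e => ¬ e.IsDiag)).card
      = Fintype.card V * (Fintype.card V - 1) / 2 := by
  have h1 : ((Finset.univ : Finset (Sym2 V)).filter (fun e => ¬ e.IsDiag)).card
      = Fintype.card {e : Sym2 V // ¬ e.IsDiag} := (Fintype.card_subtype _).symm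
  rw [h1, Sym2.card_subtype_not_diag, Nat.choose_two_right]

lemma card_cycleEdges (n : ℕ) (a b c d : Fin n) (h : [a, b, c, d].Nodup) :
    (cycleEdges n a b c d).card = 4 := by
  simp only [List.nodup_cons, List.mem_cons, List.mem_singleton, List.not_mem_nil, or_false,
    not_or, List.nodup_nil, and_true] at h
  obtain ⟨⟨hab, hac, had⟩, ⟨hbc, hbd⟩, hcd⟩ := h
  rw [cycleEdges, Finset.card_insert_of_notMem, Finset.card_insert_of_notMem,
    Finset.card_insert_of_notMem, Finset.card_singleton]
  · simp only [Finset.mem_singleton, Sym2.eq_iff]; tauto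
  · simp only [Finset.mem_insert, Finset.mem_singleton, Sym2.eq_iff]; tauto
  · simp only [Finset.mem_insert, Finset.mem_singleton, Sym2.eq_iff]; tauto

lemma not_isDiag_of_mem_cycleEdges (n : ℕ) (a b c d : Fin n) (h : [a, b, c, d].Nodup)
    (e : Sym2 (Fin n)) (he : e ∈ cycleEdges n a b c d) : ¬ e.IsDiag := by
  simp only [List.nodup_cons, List.mem_cons, List.mem_singleton, List.not_mem_nil, or_false,
    not_or, List.nodup_nil, and_true] at h
  obtain ⟨⟨hab, hac, had⟩, ⟨hbc, hbd⟩, hcd⟩ := h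
  simp only [cycleEdges, Finset.mem_insert, Finset.mem_singleton] at he
  rcases he with rfl | rfl | rfl | rfl <;> simp [Sym2.mk_isDiag_iff] <;> tauto

lemma necessity (m : ℕ) (S : Finset (Finset (Sym2 (Fin (m+1)))))
    (h : IsFourCycleSystem (m+1) S) : (m+1) % 8 = 1 := by
  classical
  obtain ⟨hcyc, huniq⟩ := h
  set E := ((Finset.univ : Finset (Sym2 (Fin (m+1)))).filter (fun e => ¬ e.IsDiag)) with hE
  -- choice function
  set f : Sym2 (Fin (m+1)) → Finset (Sym2 (Fin (m+1))) :=
    fun e => if h : ∃ C, C ∈ S ∧ e ∈ C then h.choose else ∅ with hf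
  have hrep : ∀ e ∈ E, ∃ x y : Fin (m+1), x ≠ y ∧ e = s(x, y) := by
    intro e he
    induction e with
    | h x y =>
      simp only [hE, Finset.mem_filter, Sym2.isDiag_iff_proj_eq] at he
      exact ⟨x, y, he.2, rfl⟩
  have hf1 : ∀ e ∈ E, f e ∈ S ∧ e ∈ f e := by
    intro e he
    obtain ⟨x, y, hxy, rfl⟩ := hrep e he
    obtain ⟨C, hC, -⟩ := huniq x y hxy
    rw [hf]
    have hex : ∃ C, C ∈ S ∧ s(x,y) ∈ C := ⟨C, hC⟩
    simp only [dif_pos hex]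
    exact hex.choose_spec
  have hf2 : ∀ e ∈ E, ∀ C ∈ S, e ∈ C → f e = C := by
    intro e he C hC heC
    obtain ⟨x, y, hxy, rfl⟩ := hrep e he
    obtain ⟨D, hD, hDu⟩ := huniq x y hxy
    have h1 := hf1 _ he
    rw [hDu C ⟨hC, heC⟩, hDu (f s(x,y)) ⟨h1.1, h1.2⟩]
  have hmap : ∀ e ∈ E, f e ∈ S := fun e he => (hf1 e he).1
  -- total count
  have hEcard : E.card = ∑ C ∈ S, (E.filter (fun e => f e = C)).card :=
    Finset.card_eq_sum_card_fiberwise hmap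
  have hfiber : ∀ C ∈ S, E.filter (fun e => f e = C) = C := by
    intro C hC
    ext e
    simp only [Finset.mem_filter]
    constructor
    · rintro ⟨he, rfl⟩
      exact (hf1 e he).2
    · intro heC
      obtain ⟨a, b, c, d, hnd, rfl⟩ := hcyc C hC
      have hnd2 : ¬ e.IsDiag := not_isDiag_of_mem_cycleEdges _ _ _ _ _ hnd e heC
      have heE : e ∈ E := by simp [hE, hnd2]
      exact ⟨heE, hf2 e heE _ hC heC⟩
  have hE4 : E.card = 4 * S.card := by
    have hsum : ∑ C ∈ S, (E.filter (fun e => f e = C)).card = ∑ C ∈ S, 4 :=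
      Finset.sum_congr rfl (fun C hC => by
        rw [hfiber C hC]
        obtain ⟨a, b, c, d, hnd, rfl⟩ := hcyc C hC
        exact card_cycleEdges _ _ _ _ _ hnd)
    rw [hEcard, hsum, Finset.sum_const, smul_eq_mul, mul_comm]
  -- degree count at vertex 0
  set u : Fin (m+1) := ⟨0, Nat.succ_pos m⟩ with hu
  set Eu := E.filter (fun e => u ∈ e) with hEu
  have hEu_sub : ∀ e ∈ Eu, e ∈ E := fun e he => (Finset.mem_filter.mp he).1
  have hEucard : Eu.card = m := by
    have himg : Eu = (Finset.univ.erase u).image (fun v => s(u, v)) := by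
      ext e
      induction e with
      | h x y =>
        simp only [hEu, hE, Finset.mem_filter, Finset.mem_univ, true_and,
          Sym2.isDiag_iff_proj_eq, Sym2.mem_iff, Finset.mem_image, Finset.mem_erase]
        constructor
        · rintro ⟨hxy, rfl | rfl⟩
          · exact ⟨y, ⟨fun hc => hxy hc.symm, trivial⟩, rfl⟩
          · exact ⟨x, ⟨fun hc => hxy hc, trivial⟩, by rw [Sym2.eq_swap]⟩
        · rintro ⟨v, ⟨hv, -⟩, hveq⟩
          rcases Sym2.eq_iff.mp hveq with ⟨rfl, rfl⟩ | ⟨rfl, rfl⟩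
          · exact ⟨fun hc => hv hc.symm, Or.inl rfl⟩
          · exact ⟨fun hc => hv hc, Or.inr rfl⟩
    rw [himg, Finset.card_image_of_injOn (fun x hx y hy hxy => Sym2.congr_right.mp hxy),
      Finset.card_erase_of_mem (Finset.mem_univ _), Finset.card_univ, Fintype.card_fin]
    omega
  have hEusum : Eu.card = ∑ C ∈ S, (Eu.filter (fun e => f e = C)).card :=
    Finset.card_eq_sum_card_fiberwise (fun e he => hmap e (hEu_sub e he))
  have hfiberEu : ∀ C ∈ S, Eu.filter (fun e => f e = C) = C.filter (fun e => u ∈ e) := by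
    intro C hC
    ext e
    simp only [Finset.mem_filter, hEu]
    constructor
    · rintro ⟨⟨he, hue⟩, rfl⟩
      exact ⟨(hf1 e he).2, hue⟩
    · rintro ⟨heC, hue⟩
      obtain ⟨a, b, c, d, hnd, rfl⟩ := hcyc C hC
      have hnd2 : ¬ e.IsDiag := not_isDiag_of_mem_cycleEdges _ _ _ _ _ hnd e heC
      have heE : e ∈ E := by simp [hE, hnd2]
      exact ⟨⟨heE, hue⟩, hf2 e heE _ hC heC⟩
  have heven : ∀ C ∈ S, (C.filter (fun e => u ∈ e)).card = 0 ∨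
      (C.filter (fun e => u ∈ e)).card = 2 := by
    intro C hC
    obtain ⟨a, b, c, d, hnd, rfl⟩ := hcyc C hC
    simp only [List.nodup_cons, List.mem_cons, List.mem_singleton, List.not_mem_nil, or_false,
      not_or, List.nodup_nil, and_true] at hnd
    obtain ⟨⟨hab, hac, had⟩, ⟨hbc, hbd⟩, hcd, -⟩ := hnd
    have hba : ¬b = a := fun h => hab h.symm
    have hca : ¬c = a := fun h => hac h.symm
    have hda : ¬d = a := fun h => had h.symm
    have hcb : ¬c = b := fun h => hbc h.symm
    have hdb : ¬d = b := fun h => hbd h.symm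
    have hdc : ¬d = c := fun h => hcd h.symm
    rw [cycleEdges, Finset.filter_insert, Finset.filter_insert, Finset.filter_insert,
      Finset.filter_singleton]
    rcases eq_or_ne u a with rfl | hua
    · rw [if_pos (by simp [Sym2.mem_iff]), if_neg (by simp [Sym2.mem_iff, hab, hac]),
        if_neg (by simp [Sym2.mem_iff, hac, had]), if_pos (by simp [Sym2.mem_iff])]
      refine Or.inr (Finset.card_pair ?_)
      simp only [ne_eq, Sym2.eq_iff]
      tauto
    · rcases eq_or_ne u b with rfl | hub
      · rw [if_pos (by simp [Sym2.mem_iff]), if_pos (by simp [Sym2.mem_iff]),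
          if_neg (by simp [Sym2.mem_iff, hbc, hbd]), if_neg (by simp [Sym2.mem_iff, hbd, hba])]
        refine Or.inr (Finset.card_pair ?_)
        simp only [ne_eq, Sym2.eq_iff]
        tauto
      · rcases eq_or_ne u c with rfl | huc
        · rw [if_neg (by simp [Sym2.mem_iff, hca, hcb]), if_pos (by simp [Sym2.mem_iff]),
            if_pos (by simp [Sym2.mem_iff]), if_neg (by simp [Sym2.mem_iff, hcd, hca])]
          refine Or.inr (Finset.card_pair ?_)
          simp only [ne_eq, Sym2.eq_iff]
          tauto
        · rcases eq_or_ne u d with rfl | hud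
          · rw [if_neg (by simp [Sym2.mem_iff, hda, hdb]),
              if_neg (by simp [Sym2.mem_iff, hdb, hdc]),
              if_pos (by simp [Sym2.mem_iff]), if_pos (by simp [Sym2.mem_iff])]
            refine Or.inr (Finset.card_pair ?_)
            simp only [ne_eq, Sym2.eq_iff]
            tauto
          · rw [if_neg (by simp [Sym2.mem_iff, hua, hub]),
              if_neg (by simp [Sym2.mem_iff, hub, huc]),
              if_neg (by simp [Sym2.mem_iff, huc, hud]),
              if_neg (by simp [Sym2.mem_iff, hud, hua])]
            simp
  -- m is even
  have hm_even : 2 ∣ m := by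
    rw [← hEucard, hEusum]
    apply Finset.dvd_sum
    intro C hC
    rw [hfiberEu C hC]
    rcases heven C hC with h | h <;> rw [h] <;> norm_num
  -- 8 ∣ m * (m+1)
  have hEval : E.card = (m+1) * m / 2 := by
    rw [hE, E_card', Fintype.card_fin]
    simp
  obtain ⟨c, hc⟩ := Nat.even_mul_succ_self m
  have hcomm : (m+1) * m = m * (m+1) := by ring
  have h8 : m * (m + 1) = 8 * S.card := by omega
  have hdvd : (8:ℕ) ∣ m * (m+1) := ⟨S.card, h8⟩
  have hodd : Odd (m+1) := by
    rcases hm_even with ⟨t, rfl⟩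
    exact ⟨t, by ring⟩
  have hcop : Nat.Coprime 8 (m+1) := by
    have h2 : Nat.Coprime (m+1) 2 := Nat.coprime_two_right.mpr hodd
    have := h2.pow_right 3
    have h83 : (2:ℕ)^3 = 8 := by norm_num
    rw [h83] at this
    exact this.symm
  have : (8:ℕ) ∣ m := (Nat.Coprime.dvd_of_dvd_mul_right hcop) hdvd
  omega

theorem fourCycleSystem_exists_iff (n : ℕ) (hn : 1 ≤ n) :
    (∃ S, IsFourCycleSystem n S) ↔ n % 8 = 1 := by
  constructor
  · rintro ⟨S, hS⟩
    obtain ⟨m, rfl⟩ : ∃ m, n = m + 1 := ⟨n - 1, by omega⟩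
    exact necessity m S hS
  · intro h
    obtain ⟨k, rfl⟩ : ∃ k, n = 8*k+1 := ⟨n/8, by omega⟩
    exact construction' k
end

section
/- For every natural number n ≥ 5, the edge–4-cycle incidence matrix M(n) of K_n has full row rank over ℚ; that is, its rank equals binom(n,2), the number of edges of K_n. -/
instance (n : ℕ) : DecidablePred (IsFourCycle n) := fun _ => by
  unfold IsFourCycle; infer_instance

/-- The edge–4-cycle incidence matrix of `K_n`: rows are indexed by edges of `K_n`
(non-diagonal elements of `Sym2 (Fin n)`), columns by 4-cycles of `K_n`; the entry is `1`
iff the edge belongs to the 4-cycle. -/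
def edgeCycleMatrix (n : ℕ) :
    Matrix {e : Sym2 (Fin n) // ¬ e.IsDiag} {C : Finset (Sym2 (Fin n)) // IsFourCycle n C}
      ℚ :=
  fun e C => if e.1 ∈ C.1 then 1 else 0

namespace ECMAux
open Matrix

/-- The column of the incidence matrix corresponding to an edge set `C`. -/
def col (n : ℕ) (C : Finset (Sym2 (Fin n))) : {e : Sym2 (Fin n) // ¬ e.IsDiag} → ℚ :=
  fun e => if e.1 ∈ C then 1 else 0

lemma col_mem_span (n : ℕ) {a b c d : Fin n} (hab : a ≠ b) (hac : a ≠ c) (had : a ≠ d)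
    (hbc : b ≠ c) (hbd : b ≠ d) (hcd : c ≠ d) :
    col n (cycleEdges n a b c d) ∈
      Submodule.span ℚ (Set.range (edgeCycleMatrix n).transpose) := by
  apply Submodule.subset_span
  refine ⟨⟨cycleEdges n a b c d, a, b, c, d, ?_, rfl⟩, rfl⟩
  simp [hab, hac, had, hbc, hbd, hcd]

lemma chi_mem_span (n : ℕ) {a b c d e : Fin n} (hab : a ≠ b) (hac : a ≠ c) (had : a ≠ d)
    (hae : a ≠ e) (hbc : b ≠ c) (hbd : b ≠ d) (hbe : b ≠ e) (hcd : c ≠ d) (hce : c ≠ e)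
    (hde : d ≠ e) :
    (fun f : {e : Sym2 (Fin n) // ¬ e.IsDiag} => if f.1 = s(a, b) then (1 : ℚ) else 0) ∈
      Submodule.span ℚ (Set.range (edgeCycleMatrix n).transpose) := by
  have key : (fun f : {e : Sym2 (Fin n) // ¬ e.IsDiag} => if f.1 = s(a, b) then (1 : ℚ) else 0)
      = (4 : ℚ)⁻¹ • (col n (cycleEdges n a b d c) + (2 : ℚ) • col n (cycleEdges n a b e d)
          - col n (cycleEdges n a d b e) - col n (cycleEdges n b c d e)
          - col n (cycleEdges n a c e d) + col n (cycleEdges n a b c e)) := by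
    funext f
    simp only [Pi.smul_apply, Pi.add_apply, Pi.sub_apply, smul_eq_mul, col, cycleEdges,
      Finset.mem_insert, Finset.mem_singleton]
    have hcases : f.1 = s(a,b) ∨ f.1 = s(b,d) ∨ f.1 = s(d,c) ∨ f.1 = s(c,a) ∨ f.1 = s(b,e) ∨
        f.1 = s(e,d) ∨ f.1 = s(d,a) ∨ f.1 = s(a,d) ∨ f.1 = s(d,b) ∨ f.1 = s(e,a) ∨
        f.1 = s(b,c) ∨ f.1 = s(c,d) ∨ f.1 = s(d,e) ∨ f.1 = s(e,b) ∨ f.1 = s(a,c) ∨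
        f.1 = s(c,e) ∨
        (f.1 ≠ s(a,b) ∧ f.1 ≠ s(b,d) ∧ f.1 ≠ s(d,c) ∧ f.1 ≠ s(c,a) ∧ f.1 ≠ s(b,e) ∧
         f.1 ≠ s(e,d) ∧ f.1 ≠ s(d,a) ∧ f.1 ≠ s(a,d) ∧ f.1 ≠ s(d,b) ∧ f.1 ≠ s(e,a) ∧
         f.1 ≠ s(b,c) ∧ f.1 ≠ s(c,d) ∧ f.1 ≠ s(d,e) ∧ f.1 ≠ s(e,b) ∧ f.1 ≠ s(a,c) ∧
         f.1 ≠ s(c,e)) := by tauto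
    rcases hcases with h|h|h|h|h|h|h|h|h|h|h|h|h|h|h|h|h <;>
      [skip; skip; skip; skip; skip; skip; skip; skip; skip; skip; skip; skip; skip; skip;
       skip; skip; (obtain ⟨h1,h2,h3,h4,h5,h6,h7,h8,h9,h10,h11,h12,h13,h14,h15,h16⟩ := h;
                    simp [h1,h2,h3,h4,h5,h6,h7,h8,h9,h10,h11,h12,h13,h14,h15,h16])] <;>
      simp [h, Sym2.eq_iff, hab, hac, had, hae, hbc, hbd, hbe, hcd, hce, hde,
        hab.symm, hac.symm, had.symm, hae.symm, hbc.symm, hbd.symm, hbe.symm, hcd.symm,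
        hce.symm, hde.symm] <;> norm_num
  rw [key]
  refine Submodule.smul_mem _ _ ?_
  refine Submodule.add_mem _ (Submodule.sub_mem _ (Submodule.sub_mem _ (Submodule.sub_mem _
    (Submodule.add_mem _ ?_ (Submodule.smul_mem _ _ ?_)) ?_) ?_) ?_) ?_
  · exact col_mem_span n hab had hac hbd hbc (Ne.symm hcd)
  · exact col_mem_span n hab hae had hbe hbd (Ne.symm hde)
  · exact col_mem_span n had hab hae (Ne.symm hbd) hde hbe
  · exact col_mem_span n hbc hbd hbe hcd hce hde
  · exact col_mem_span n hac hae had hce hcd (Ne.symm hde)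
  · exact col_mem_span n hab hac hae hbc hbe hce

end ECMAux

/-- The edge–4-cycle incidence matrix of `K_n` has full row rank `binom(n,2)` for `n ≥ 5`. -/
theorem edgeCycleMatrix_rank (n : ℕ) (hn : 5 ≤ n) :
    (edgeCycleMatrix n).rank = n.choose 2 := by
  classical
  have hspan : LinearMap.range (edgeCycleMatrix n).mulVecLin = ⊤ := by
    rw [Matrix.range_mulVecLin, eq_top_iff]
    show _ ≤ Submodule.span ℚ (Set.range (edgeCycleMatrix n).transpose)
    rintro g -
    have hg : g = ∑ i, Pi.single i (g i) := (Finset.univ_sum_single g).symm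
    rw [hg]
    refine Submodule.sum_mem _ fun i _ => ?_
    have : Pi.single i (g i) = g i • (Pi.single i 1 : {e : Sym2 (Fin n) // ¬ e.IsDiag} → ℚ) := by
      funext j
      simp [Pi.single_apply]
    rw [this]
    refine Submodule.smul_mem _ _ ?_
    obtain ⟨e, he⟩ := i
    induction e using Sym2.ind with
    | _ a b =>
      have hab : a ≠ b := by simpa [Sym2.mk_isDiag_iff] using he
      -- find three more distinct vertices
      have hcard : 3 ≤ (Finset.univ \ {a, b} : Finset (Fin n)).card := by
        have h1 : ({a, b} : Finset (Fin n)).card ≤ 2 := Finset.card_insert_le _ _ |>.trans (by simp)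
        have h2 : (Finset.univ \ {a, b} : Finset (Fin n)).card
            = Fintype.card (Fin n) - ({a, b} : Finset (Fin n)).card := by
          rw [Finset.card_sdiff_of_subset (Finset.subset_univ _), Finset.card_univ]
        rw [h2, Fintype.card_fin]
        omega
      obtain ⟨t, hts, htcard⟩ := Finset.exists_subset_card_eq hcard
      obtain ⟨c, d, e', hcd, hce, hde, rfl⟩ := Finset.card_eq_three.mp htcard
      have hmc := hts (by simp : c ∈ ({c, d, e'} : Finset (Fin n)))
      have hmd := hts (by simp : d ∈ ({c, d, e'} : Finset (Fin n)))
      have hme := hts (by simp : e' ∈ ({c, d, e'} : Finset (Fin n)))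
      simp only [Finset.mem_sdiff, Finset.mem_insert, Finset.mem_singleton, not_or] at hmc hmd hme
      have key := ECMAux.chi_mem_span n hab (Ne.symm hmc.2.1) (Ne.symm hmd.2.1)
        (Ne.symm hme.2.1) (Ne.symm hmc.2.2) (Ne.symm hmd.2.2) (Ne.symm hme.2.2) hcd hce hde
      have : Pi.single (⟨s(a, b), he⟩ : {e : Sym2 (Fin n) // ¬ e.IsDiag}) (1 : ℚ)
          = fun f : {e : Sym2 (Fin n) // ¬ e.IsDiag} => if f.1 = s(a, b) then (1 : ℚ) else 0 := by
        funext f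
        simp [Pi.single_apply, Subtype.ext_iff]
      rw [this]
      exact key
  rw [Matrix.rank, hspan, finrank_top, Module.finrank_fintype_fun_eq_card,
    Sym2.card_subtype_not_diag, Fintype.card_fin]
end

section
/- For every natural number n ≥ 5, the kernel of the edge–4-cycle incidence matrix M(n) of K_n (the space of rational vectors x indexed by the 4-cycles of K_n with M(n)·x = 0) has dimension 3·binom(n,4) − binom(n,2) over ℚ. -/
open Finset Matrix

/-- The `Sym2`-map embedding induced by an embedding of vertex types. -/
def s2emb {m n : ℕ} (f : Fin m ↪ Fin n) : Sym2 (Fin m) ↪ Sym2 (Fin n) :=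
  ⟨Sym2.map f, Sym2.map.injective f.injective⟩

lemma cycleEdges_map {m n : ℕ} (f : Fin m ↪ Fin n) (a b c d : Fin m) :
    Finset.map (s2emb f) (cycleEdges m a b c d) =
      cycleEdges n (f a) (f b) (f c) (f d) := by
  simp [cycleEdges, s2emb, Finset.map_insert, Sym2.map_pair_eq]

lemma nodup_map {m n : ℕ} (f : Fin m ↪ Fin n) {a b c d : Fin m}
    (h : [a, b, c, d].Nodup) : [f a, f b, f c, f d].Nodup := by
  have := h.map (f := f) f.injective
  simpa using this

lemma isFourCycle_map {m n : ℕ} (f : Fin m ↪ Fin n) {a b c d : Fin m}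
    (h : [a, b, c, d].Nodup) :
    IsFourCycle n (Finset.map (s2emb f) (cycleEdges m a b c d)) :=
  ⟨f a, f b, f c, f d, nodup_map f h, (cycleEdges_map f a b c d) ▸ rfl⟩

/-- The vertex set of a set of edges. -/
def verts (n : ℕ) (C : Finset (Sym2 (Fin n))) : Finset (Fin n) :=
  univ.filter (fun v => ∃ e ∈ C, v ∈ e)

lemma verts_cycleEdges {n : ℕ} (a b c d : Fin n) :
    verts n (cycleEdges n a b c d) = {a, b, c, d} := by
  ext v
  simp only [verts, cycleEdges, mem_filter, mem_univ, true_and, mem_insert,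
    mem_singleton, Sym2.mem_iff]
  constructor
  · rintro ⟨e, he, hv⟩
    rcases he with h | h | h | h <;> subst h <;> rcases Sym2.mem_iff.mp hv with h | h <;>
      simp [h]
  · rintro (h | h | h | h)
    · exact ⟨s(a,b), by simp, by simp [h]⟩
    · exact ⟨s(a,b), by simp, by simp [h]⟩
    · exact ⟨s(b,c), by simp, by simp [h]⟩
    · exact ⟨s(c,d), by simp, by simp [h]⟩

lemma fin4_classify : ∀ i j k l : Fin 4, [i,j,k,l].Nodup →
    (cycleEdges 4 i j k l = cycleEdges 4 0 1 2 3 ∨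
     cycleEdges 4 i j k l = cycleEdges 4 0 2 1 3 ∨
     cycleEdges 4 i j k l = cycleEdges 4 0 1 3 2) := by decide

lemma card_fourCycles (n : ℕ) :
    Fintype.card {C : Finset (Sym2 (Fin n)) // IsFourCycle n C} = 3 * n.choose 4 := by
  classical
  rw [Fintype.card_subtype]
  rw [card_eq_sum_card_fiberwise (f := verts n) (t := univ.powersetCard 4)
    (by
      intro C hC
      rw [mem_coe, mem_filter] at hC
      obtain ⟨-, a, b, c, d, hnd, rfl⟩ := hC
      rw [mem_coe, Finset.mem_powersetCard_univ, verts_cycleEdges]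
      simp only [List.nodup_cons, List.mem_cons, List.not_mem_nil, or_false,
        List.nodup_nil, and_true, not_or] at hnd
      obtain ⟨⟨h1, h2, h3⟩, ⟨h4, h5⟩, h6⟩ := hnd
      rw [card_insert_of_notMem (by simp [h1, h2, h3]),
        card_insert_of_notMem (by simp [h4, h5]),
        card_insert_of_notMem (by simp [h6]), card_singleton])]
  have hfib : ∀ s ∈ univ.powersetCard 4,
      #(filter (fun C => verts n C = s) (filter (IsFourCycle n) univ)) = 3 := by
    intro s hs
    rw [Finset.mem_powersetCard_univ] at hs
    obtain ⟨w, t, hwt, rfl, ht3⟩ := Finset.card_eq_succ.mp hs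
    obtain ⟨x, y, z, hxy, hxz, hyz, rfl⟩ := Finset.card_eq_three.mp ht3
    simp only [mem_insert, mem_singleton, not_or] at hwt
    obtain ⟨hwx, hwy, hwz⟩ := hwt
    set g : Fin 4 ↪ Fin n :=
      ⟨![w, x, y, z], by
        intro i j hij
        fin_cases i <;> fin_cases j <;> simp_all⟩ with hg
    have hgv : g 0 = w ∧ g 1 = x ∧ g 2 = y ∧ g 3 = z := by
      refine ⟨rfl, rfl, rfl, rfl⟩
    have hmem : ∀ v ∈ (insert w {x, y, z} : Finset (Fin n)), ∃ i, g i = v := by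
      intro v hv
      simp only [mem_insert, mem_singleton] at hv
      rcases hv with rfl | rfl | rfl | rfl
      exacts [⟨0, rfl⟩, ⟨1, rfl⟩, ⟨2, rfl⟩, ⟨3, rfl⟩]
    have himg : ∀ i : Fin 4, g i ∈ (insert w {x, y, z} : Finset (Fin n)) := by
      intro i; fin_cases i <;> simp [hg]
      exacts [Or.inl rfl, Or.inr (Or.inl rfl), Or.inr (Or.inr (Or.inl rfl)), Or.inr (Or.inr (Or.inr rfl))]
    have hkey : filter (fun C => verts n C = insert w {x, y, z}) (filter (IsFourCycle n) univ)
        = {Finset.map (s2emb g) (cycleEdges 4 0 1 2 3),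
           Finset.map (s2emb g) (cycleEdges 4 0 2 1 3),
           Finset.map (s2emb g) (cycleEdges 4 0 1 3 2)} := by
      ext C
      simp only [mem_filter, mem_univ, true_and, mem_insert, mem_singleton]
      constructor
      · rintro ⟨⟨a, b, c, d, hnd, rfl⟩, hv⟩
        rw [verts_cycleEdges] at hv
        have ha : a ∈ (insert w {x, y, z} : Finset (Fin n)) := by rw [← hv]; simp
        have hb : b ∈ (insert w {x, y, z} : Finset (Fin n)) := by rw [← hv]; simp
        have hc : c ∈ (insert w {x, y, z} : Finset (Fin n)) := by rw [← hv]; simp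
        have hd : d ∈ (insert w {x, y, z} : Finset (Fin n)) := by rw [← hv]; simp
        obtain ⟨i, rfl⟩ := hmem a ha
        obtain ⟨j, rfl⟩ := hmem b hb
        obtain ⟨k, rfl⟩ := hmem c hc
        obtain ⟨l, rfl⟩ := hmem d hd
        have hnd4 : [i, j, k, l].Nodup :=
          List.Nodup.of_map g (by simpa using hnd)
        rw [← cycleEdges_map g i j k l]
        rcases fin4_classify i j k l hnd4 with h | h | h <;> rw [h] <;> tauto
      · rintro (rfl | rfl | rfl) <;>
          refine ⟨isFourCycle_map g (by decide), ?_⟩ <;>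
          rw [cycleEdges_map, verts_cycleEdges] <;>
          simp only [hgv.1, hgv.2.1, hgv.2.2.1, hgv.2.2.2] <;>
          · ext v; simp; tauto
    rw [hkey]
    have hinj := Finset.map_injective (s2emb g)
    rw [card_insert_of_notMem, card_insert_of_notMem, card_singleton]
    · simp only [mem_singleton]
      intro h; exact absurd (hinj h) (by decide)
    · simp only [mem_insert, mem_singleton, not_or]
      constructor <;> intro h <;> exact absurd (hinj h) (by decide)
  rw [Finset.sum_congr rfl hfib, Finset.sum_const, Finset.card_powersetCard,
    Finset.card_univ, Fintype.card_fin, smul_eq_mul, mul_comm]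

/-- Column vector of a cycle. -/
def colV (n : ℕ) (C : Finset (Sym2 (Fin n))) : {e : Sym2 (Fin n) // ¬ e.IsDiag} → ℚ :=
  fun e => if e.1 ∈ C then 1 else 0

lemma fin5_identity : ∀ e : Sym2 (Fin 5),
    (let cv : Fin 5 → Fin 5 → Fin 5 → Fin 5 → ℤ := fun a b c d =>
      if e ∈ cycleEdges 5 a b c d then 1 else 0
    2 * cv 0 1 2 3 + -1 * cv 0 2 1 3 + 2 * cv 0 1 3 2 +
    2 * cv 0 1 2 4 + -1 * cv 0 2 1 4 + 2 * cv 0 1 4 2 +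
    2 * cv 0 1 3 4 + -1 * cv 0 3 1 4 + 2 * cv 0 1 4 3 +
    -1 * cv 0 2 3 4 + -1 * cv 0 3 2 4 + -1 * cv 0 2 4 3 +
    -1 * cv 1 2 3 4 + -1 * cv 1 3 2 4 + -1 * cv 1 2 4 3)
      = 12 * (if e = s(0, 1) then 1 else 0) := by decide

lemma fin5_identity_q : ∀ e : Sym2 (Fin 5),
    (let cv : Fin 5 → Fin 5 → Fin 5 → Fin 5 → ℚ := fun a b c d =>
      if e ∈ cycleEdges 5 a b c d then 1 else 0
    2 * cv 0 1 2 3 + -1 * cv 0 2 1 3 + 2 * cv 0 1 3 2 +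
    2 * cv 0 1 2 4 + -1 * cv 0 2 1 4 + 2 * cv 0 1 4 2 +
    2 * cv 0 1 3 4 + -1 * cv 0 3 1 4 + 2 * cv 0 1 4 3 +
    -1 * cv 0 2 3 4 + -1 * cv 0 3 2 4 + -1 * cv 0 2 4 3 +
    -1 * cv 1 2 3 4 + -1 * cv 1 3 2 4 + -1 * cv 1 2 4 3)
      = 12 * (if e = s(0, 1) then 1 else 0) := by
  intro e
  have h := fin5_identity e
  have key : ∀ (P : Prop) [Decidable P],
      ((if P then (1 : ℤ) else 0 : ℤ) : ℚ) = if P then (1 : ℚ) else 0 := by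
    intro P _; split <;> simp
  have h2 := congrArg (fun z : ℤ => (z : ℚ)) h
  simp only at h2
  push_cast [key] at h2
  simpa using h2

lemma col_mem_range {n : ℕ} (g : Fin 5 ↪ Fin n) (a b c d : Fin 5)
    (h : [a, b, c, d].Nodup) :
    colV n (Finset.map (s2emb g) (cycleEdges 5 a b c d)) ∈
      Set.range (edgeCycleMatrix n)ᵀ :=
  ⟨⟨_, isFourCycle_map g h⟩, rfl⟩

lemma mem_map_s2emb {m n : ℕ} (g : Fin m ↪ Fin n) (e : Sym2 (Fin m))
    (C : Finset (Sym2 (Fin m))) :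
    Sym2.map g e ∈ Finset.map (s2emb g) C ↔ e ∈ C :=
  Finset.mem_map' (s2emb g)

lemma single_mem_span (n : ℕ) (hn : 5 ≤ n) (e : {e : Sym2 (Fin n) // ¬ e.IsDiag}) :
    (fun e' => if e = e' then (1 : ℚ) else 0) ∈
      Submodule.span ℚ (Set.range (edgeCycleMatrix n)ᵀ) := by
  classical
  obtain ⟨e1, he⟩ := e
  induction e1 using Sym2.inductionOn with
  | hf u v =>
  have huv : u ≠ v := fun h => he (by simp [h])
  have hcard : 3 ≤ #(univ \ {u, v} : Finset (Fin n)) := by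
    have h1 : #({u, v} : Finset (Fin n)) = 2 := by
      rw [card_insert_of_notMem (by simp [huv]), card_singleton]
    have h2 : #(univ \ {u, v} : Finset (Fin n)) = n - 2 := by
      rw [card_sdiff_of_subset (subset_univ _), card_univ, Fintype.card_fin, h1]
    omega
  obtain ⟨t, hts, ht3⟩ := Finset.exists_subset_card_eq hcard
  obtain ⟨x, y, z, hxy, hxz, hyz, rfl⟩ := Finset.card_eq_three.mp ht3
  have hx := hts (by simp : x ∈ ({x, y, z} : Finset (Fin n)))
  have hy := hts (by simp : y ∈ ({x, y, z} : Finset (Fin n)))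
  have hz := hts (by simp : z ∈ ({x, y, z} : Finset (Fin n)))
  simp only [mem_sdiff, mem_univ, true_and, mem_insert, mem_singleton, not_or] at hx hy hz
  set g : Fin 5 ↪ Fin n :=
    ⟨![u, v, x, y, z], by
      intro i j hij
      fin_cases i <;> fin_cases j <;> simp_all⟩ with hg
  set cc : Fin 5 → Fin 5 → Fin 5 → Fin 5 → ({e : Sym2 (Fin n) // ¬ e.IsDiag} → ℚ) :=
    fun a b c d => colV n (Finset.map (s2emb g) (cycleEdges 5 a b c d)) with hcc
  have hiden : (2:ℚ) • cc 0 1 2 3 + (-1:ℚ) • cc 0 2 1 3 + (2:ℚ) • cc 0 1 3 2 +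
      (2:ℚ) • cc 0 1 2 4 + (-1:ℚ) • cc 0 2 1 4 + (2:ℚ) • cc 0 1 4 2 +
      (2:ℚ) • cc 0 1 3 4 + (-1:ℚ) • cc 0 3 1 4 + (2:ℚ) • cc 0 1 4 3 +
      (-1:ℚ) • cc 0 2 3 4 + (-1:ℚ) • cc 0 3 2 4 + (-1:ℚ) • cc 0 2 4 3 +
      (-1:ℚ) • cc 1 2 3 4 + (-1:ℚ) • cc 1 3 2 4 + (-1:ℚ) • cc 1 2 4 3
      = (12:ℚ) • (fun e' => if (⟨s(u,v), he⟩ : {e : Sym2 (Fin n) // ¬ e.IsDiag}) = e'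
          then (1:ℚ) else 0) := by
    funext e'
    simp only [Pi.add_apply, Pi.smul_apply, smul_eq_mul, hcc, colV]
    by_cases hr : ∃ e0 : Sym2 (Fin 5), Sym2.map g e0 = e'.1
    · obtain ⟨e0, he0⟩ := hr
      have hsuv : Sym2.map g s(0, 1) = s(u, v) := by
        rw [Sym2.map_pair_eq]; rfl
      have heq : ((⟨s(u,v), he⟩ : {e : Sym2 (Fin n) // ¬ e.IsDiag}) = e') = (e0 = s(0,1)) := by
        apply propext
        rw [Subtype.ext_iff]
        constructor
        · intro h
          exact Sym2.map.injective g.injective (by rw [he0, hsuv, ← h])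
        · intro h
          rw [← he0, h, hsuv]
      simp only [heq, ← he0, mem_map_s2emb]
      simpa using fin5_identity_q e0
    · push_neg at hr
      have hmem : ∀ (a b c d : Fin 5), e'.1 ∉ Finset.map (s2emb g) (cycleEdges 5 a b c d) := by
        intro a b c d hc
        obtain ⟨e0, -, he0⟩ := Finset.mem_map.mp hc
        exact hr e0 he0
      have hne : ¬ ((⟨s(u,v), he⟩ : {e : Sym2 (Fin n) // ¬ e.IsDiag}) = e') := by
        intro h
        apply hr s(0, 1)
        rw [Sym2.map_pair_eq]
        rw [Subtype.ext_iff] at h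
        exact h
      simp [hmem, hne]
  have hfinal : (fun e' => if (⟨s(u,v), he⟩ : {e : Sym2 (Fin n) // ¬ e.IsDiag}) = e'
      then (1:ℚ) else 0) = (12⁻¹ : ℚ) •
      ((2:ℚ) • cc 0 1 2 3 + (-1:ℚ) • cc 0 2 1 3 + (2:ℚ) • cc 0 1 3 2 +
      (2:ℚ) • cc 0 1 2 4 + (-1:ℚ) • cc 0 2 1 4 + (2:ℚ) • cc 0 1 4 2 +
      (2:ℚ) • cc 0 1 3 4 + (-1:ℚ) • cc 0 3 1 4 + (2:ℚ) • cc 0 1 4 3 +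
      (-1:ℚ) • cc 0 2 3 4 + (-1:ℚ) • cc 0 3 2 4 + (-1:ℚ) • cc 0 2 4 3 +
      (-1:ℚ) • cc 1 2 3 4 + (-1:ℚ) • cc 1 3 2 4 + (-1:ℚ) • cc 1 2 4 3) := by
    rw [hiden, smul_smul]
    norm_num
  rw [hfinal]
  have hcmem : ∀ (a b c d : Fin 5), [a,b,c,d].Nodup →
      cc a b c d ∈ Submodule.span ℚ (Set.range (edgeCycleMatrix n)ᵀ) := by
    intro a b c d h
    exact Submodule.subset_span (col_mem_range g a b c d h)
  refine Submodule.smul_mem _ _ ?_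
  repeat'
    refine Submodule.add_mem _ ?_ ?_
  all_goals exact Submodule.smul_mem _ _ (hcmem _ _ _ _ (by decide))

/-- The kernel of the edge–4-cycle incidence matrix of `K_n` has dimension
`3·binom(n,4) − binom(n,2)` for `n ≥ 5`. -/
theorem edgeCycleMatrix_ker_finrank (n : ℕ) (hn : 5 ≤ n) :
    Module.finrank ℚ (LinearMap.ker (edgeCycleMatrix n).mulVecLin) =
      3 * n.choose 4 - n.choose 2 := by
  classical
  have hre : LinearMap.range (edgeCycleMatrix n).mulVecLin = ⊤ := by
    rw [Matrix.range_mulVecLin, eq_top_iff]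
    intro f _
    rw [pi_eq_sum_univ f]
    exact Submodule.sum_mem _ fun e _ => Submodule.smul_mem _ _ (single_mem_span n hn e)
  have h1 := LinearMap.finrank_range_add_finrank_ker (edgeCycleMatrix n).mulVecLin
  rw [hre, finrank_top, Module.finrank_pi, Module.finrank_pi,
    Sym2.card_subtype_not_diag, Fintype.card_fin, card_fourCycles] at h1
  omega
end

section
/- For every natural number n ≥ 6, the signed frequency vectors of the double-diamonds of K_n span the kernel of the edge–4-cycle incidence matrix M(n) over ℚ; equivalently, every rational vector x indexed by the 4-cycles of K_n with M(n)·x = 0 is a rational linear combination of double-diamond vectors. -/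
/-- The signed frequency vector of the double-diamond on `a,b,c,d,e,f`. -/
def doubleDiamondVec (n : ℕ) (a b c d e f : Fin n) :
    {C : Finset (Sym2 (Fin n)) // IsFourCycle n C} → ℚ :=
  fun C =>
    (if C.1 = cycleEdges n a b c d then 1 else 0)
    + (if C.1 = cycleEdges n a e c f then 1 else 0)
    - (if C.1 = cycleEdges n a b c f then 1 else 0)
    - (if C.1 = cycleEdges n a e c d then 1 else 0)

set_option maxHeartbeats 1600000


open Finset

section ZSection
variable {n : ℕ}

def Df (Z : Fin n → Fin n → Fin n → Fin n → ℚ) (a c b : Fin n) : ℚ := ∑ d, Z a b c d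
def sf (Z : Fin n → Fin n → Fin n → Fin n → ℚ) (a c : Fin n) : ℚ := ∑ b, Df Z a c b
def Tf (Z : Fin n → Fin n → Fin n → Fin n → ℚ) (u : Fin n) : ℚ := ∑ s, sf Z u s
def Gf (Z : Fin n → Fin n → Fin n → Fin n → ℚ) (a c b : Fin n) : ℚ :=
  ((n:ℚ) - 3) * Df Z a c b - sf Z a c / 2

def Uset (a b c d : Fin n) : Finset (Fin n) := (((univ.erase a).erase b).erase c).erase d

variable {Z : Fin n → Fin n → Fin n → Fin n → ℚ}
variable (hZ0 : ∀ a b c d : Fin n, (a = b ∨ a = c ∨ a = d ∨ b = c ∨ b = d ∨ c = d) → Z a b c d = 0)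
variable (hZs1 : ∀ a b c d : Fin n, Z a b c d = Z a d c b)
variable (hZs2 : ∀ a b c d : Fin n, Z a b c d = Z c b a d)

include hZ0 in
lemma Df_zero1 (a c : Fin n) : Df Z a c a = 0 :=
  Finset.sum_eq_zero fun d _ => hZ0 a a c d (Or.inl rfl)

include hZ0 in
lemma Df_zero2 (a c : Fin n) : Df Z a c c = 0 :=
  Finset.sum_eq_zero fun d _ => hZ0 a c c d (Or.inr (Or.inr (Or.inr (Or.inl rfl))))

include hZ0 in
lemma Df_zero3 (a b : Fin n) : Df Z a a b = 0 :=
  Finset.sum_eq_zero fun d _ => hZ0 a b a d (Or.inr (Or.inl rfl))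

include hZ0 in
lemma sf_zero (a : Fin n) : sf Z a a = 0 :=
  Finset.sum_eq_zero fun b _ => Df_zero3 hZ0 a b

include hZs2 in
lemma Df_symm (a c b : Fin n) : Df Z a c b = Df Z c a b :=
  Finset.sum_congr rfl fun d _ => hZs2 a b c d

include hZs2 in
lemma sf_symm (a c : Fin n) : sf Z a c = sf Z c a :=
  Finset.sum_congr rfl fun b _ => Df_symm hZs2 a c b

include hZs1 in
lemma row_sum (a c d : Fin n) : ∑ e, Z a e c d = Df Z a c d :=
  Finset.sum_congr rfl fun e _ => hZs1 a e c d

/-- Sum over the universe minus four distinct points. -/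
lemma sum_Uset (f : Fin n → ℚ) {a b c d : Fin n} (hab : a ≠ b) (hac : a ≠ c) (had : a ≠ d)
    (hbc : b ≠ c) (hbd : b ≠ d) (hcd : c ≠ d) :
    ∑ x ∈ Uset a b c d, f x = (∑ x, f x) - f a - f b - f c - f d := by
  unfold Uset
  rw [Finset.sum_erase_eq_sub (by simp [mem_erase, had.symm, hbd.symm, hcd.symm]),
    Finset.sum_erase_eq_sub (by simp [mem_erase, hac.symm, hbc.symm]),
    Finset.sum_erase_eq_sub (by simp [mem_erase, hab.symm]),
    Finset.sum_erase_eq_sub (mem_univ a)]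

lemma card_Uset {a b c d : Fin n} (hab : a ≠ b) (hac : a ≠ c) (had : a ≠ d)
    (hbc : b ≠ c) (hbd : b ≠ d) (hcd : c ≠ d) : (Uset a b c d).card = n - 4 := by
  unfold Uset
  rw [Finset.card_erase_of_mem (by simp [mem_erase, had.symm, hbd.symm, hcd.symm]),
    Finset.card_erase_of_mem (by simp [mem_erase, hac.symm, hbc.symm]),
    Finset.card_erase_of_mem (by simp [mem_erase, hab.symm]),
    Finset.card_erase_of_mem (mem_univ a), card_univ, Fintype.card_fin]
  omega

lemma mem_Uset {x a b c d : Fin n} (h : x ∈ Uset a b c d) :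
    x ≠ a ∧ x ≠ b ∧ x ≠ c ∧ x ≠ d := by
  unfold Uset at h
  simp only [mem_erase, mem_univ, and_true] at h
  tauto


variable (hZH : ∀ a b c d e f : Fin n, ([a,b,c,d,e,f] : List (Fin n)).Nodup →
    Z a b c d + Z a e c f = Z a b c f + Z a e c d)

lemma nodup6_mk {m : ℕ} {a b c d e f : Fin m} (h1 : a≠b) (h2 : a≠c) (h3 : a≠d) (h4 : a≠e)
    (h5 : a≠f) (h6 : b≠c) (h7 : b≠d) (h8 : b≠e) (h9 : b≠f) (h10 : c≠d) (h11 : c≠e)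
    (h12 : c≠f) (h13 : d≠e) (h14 : d≠f) (h15 : e≠f) : ([a,b,c,d,e,f] : List (Fin m)).Nodup := by
  simp [List.nodup_cons, *]

include hZ0 hZs1 hZH in
lemma Rprime (hn : 6 ≤ n) {a b c d : Fin n} (hab : a ≠ b) (hac : a ≠ c) (had : a ≠ d)
    (hbc : b ≠ c) (hbd : b ≠ d) (hcd : c ≠ d) :
    ((n:ℚ) - 3) * (((n:ℚ) - 4) * Z a b c d) = Gf Z a c b + Gf Z a c d := by
  set U := Uset a b c d with hU
  have hcardU : ((U.card : ℚ)) = (n:ℚ) - 4 := by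
    rw [hU, card_Uset hab hac had hbc hbd hcd, Nat.cast_sub (by omega)]; norm_num
  have hcardUe : ∀ e ∈ U, (((U.erase e).card : ℚ)) = (n:ℚ) - 5 := by
    intro e he
    rw [Finset.card_erase_of_mem he, hU, card_Uset hab hac had hbc hbd hcd,
      show n - 4 - 1 = n - 5 by omega, Nat.cast_sub (by omega)]; norm_num
  have hSU : ∑ f ∈ U, Z a b c f = Df Z a c b - Z a b c d := by
    rw [hU, sum_Uset (fun f => Z a b c f) hab hac had hbc hbd hcd, hZ0 a b c a (by tauto),
      hZ0 a b c b (by tauto), hZ0 a b c c (by tauto)]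
    simp only [Df]; ring
  have hSV : ∑ e ∈ U, Z a e c d = Df Z a c d - Z a b c d := by
    rw [hU, sum_Uset (fun e => Z a e c d) hab hac had hbc hbd hcd, hZ0 a a c d (by tauto),
      hZ0 a c c d (by tauto), hZ0 a d c d (by tauto), row_sum hZs1 a c d]
    ring
  have hSB : ∑ e ∈ U, Z a e c b = Df Z a c b - Z a b c d := by
    rw [hU, sum_Uset (fun e => Z a e c b) hab hac had hbc hbd hcd, hZ0 a a c b (by tauto),
      hZ0 a c c b (by tauto), hZ0 a b c b (by tauto), row_sum hZs1 a c b, hZs1 a d c b]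
    ring
  have hSD : ∑ e ∈ U, Df Z a c e = sf Z a c - Df Z a c b - Df Z a c d := by
    rw [hU, sum_Uset (fun e => Df Z a c e) hab hac had hbc hbd hcd, Df_zero1 hZ0 a c,
      Df_zero2 hZ0 a c]
    simp only [sf]; ring
  have key : ∀ e ∈ U, ∀ f ∈ U.erase e, Z a b c d + Z a e c f = Z a b c f + Z a e c d := by
    intro e he f hf
    obtain ⟨hea, heb, hec, hed⟩ := mem_Uset he
    have hfe : f ≠ e := (Finset.mem_erase.mp hf).1
    obtain ⟨hfa, hfb, hfc, hfd⟩ := mem_Uset (Finset.mem_of_mem_erase hf)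
    exact hZH a b c d e f (nodup6_mk hab hac had hea.symm hfa.symm hbc hbd heb.symm hfb.symm
      hcd hec.symm hfc.symm hed.symm hfd.symm hfe.symm)
  have main : (∑ e ∈ U, ∑ f ∈ U.erase e, Z a b c d) + (∑ e ∈ U, ∑ f ∈ U.erase e, Z a e c f)
      = (∑ e ∈ U, ∑ f ∈ U.erase e, Z a b c f) + (∑ e ∈ U, ∑ f ∈ U.erase e, Z a e c d) := by
    rw [← Finset.sum_add_distrib, ← Finset.sum_add_distrib]
    refine Finset.sum_congr rfl fun e he => ?_
    rw [← Finset.sum_add_distrib, ← Finset.sum_add_distrib]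
    exact Finset.sum_congr rfl fun f hf => key e he f hf
  have P1 : ∑ e ∈ U, ∑ f ∈ U.erase e, Z a b c d = ((n:ℚ)-4) * (((n:ℚ)-5) * Z a b c d) := by
    have inner : ∀ e ∈ U, ∑ f ∈ U.erase e, Z a b c d = ((n:ℚ)-5) * Z a b c d := fun e he => by
      rw [Finset.sum_const, nsmul_eq_mul, hcardUe e he]
    rw [Finset.sum_congr rfl inner, Finset.sum_const, nsmul_eq_mul, hcardU]
  have P3 : ∑ e ∈ U, ∑ f ∈ U.erase e, Z a b c f = ((n:ℚ)-5) * (Df Z a c b - Z a b c d) := by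
    have inner : ∀ e ∈ U, ∑ f ∈ U.erase e, Z a b c f = (Df Z a c b - Z a b c d) - Z a b c e :=
      fun e he => by rw [Finset.sum_erase_eq_sub he, hSU]
    rw [Finset.sum_congr rfl inner, Finset.sum_sub_distrib, Finset.sum_const, nsmul_eq_mul,
      hcardU, hSU]
    ring
  have P4 : ∑ e ∈ U, ∑ f ∈ U.erase e, Z a e c d = ((n:ℚ)-5) * (Df Z a c d - Z a b c d) := by
    have inner : ∀ e ∈ U, ∑ f ∈ U.erase e, Z a e c d = ((n:ℚ)-5) * Z a e c d := fun e he => by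
      rw [Finset.sum_const, nsmul_eq_mul, hcardUe e he]
    rw [Finset.sum_congr rfl inner, ← Finset.mul_sum, hSV]
  have P2 : ∑ e ∈ U, ∑ f ∈ U.erase e, Z a e c f
      = sf Z a c - 2*Df Z a c b - 2*Df Z a c d + 2*Z a b c d := by
    have inner : ∀ e ∈ U, ∑ f ∈ U.erase e, Z a e c f = Df Z a c e - Z a e c b - Z a e c d :=
      fun e he => by
        rw [Finset.sum_erase_eq_sub he, hU, sum_Uset (fun f => Z a e c f) hab hac had hbc hbd hcd,
          hZ0 a e c a (by tauto), hZ0 a e c c (by tauto), hZ0 a e c e (by tauto)]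
        simp only [Df]; ring
    rw [Finset.sum_congr rfl inner, Finset.sum_sub_distrib, Finset.sum_sub_distrib, hSD, hSB, hSV]
    ring
  simp only [Gf]
  linear_combination main - P1 - P2 + P3 + P4

def Vset (a b c : Fin n) : Finset (Fin n) := ((univ.erase a).erase b).erase c

lemma sum_Vset (f : Fin n → ℚ) {a b c : Fin n} (hab : a ≠ b) (hac : a ≠ c) (hbc : b ≠ c) :
    ∑ x ∈ Vset a b c, f x = (∑ x, f x) - f a - f b - f c := by
  unfold Vset
  rw [Finset.sum_erase_eq_sub (by simp [mem_erase, hac.symm, hbc.symm]),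
    Finset.sum_erase_eq_sub (by simp [mem_erase, hab.symm]),
    Finset.sum_erase_eq_sub (mem_univ a)]

lemma card_Vset {a b c : Fin n} (hab : a ≠ b) (hac : a ≠ c) (hbc : b ≠ c) :
    (Vset a b c).card = n - 3 := by
  unfold Vset
  rw [Finset.card_erase_of_mem (by simp [mem_erase, hac.symm, hbc.symm]),
    Finset.card_erase_of_mem (by simp [mem_erase, hab.symm]),
    Finset.card_erase_of_mem (mem_univ a), card_univ, Fintype.card_fin]
  omega

lemma mem_Vset {x a b c : Fin n} (h : x ∈ Vset a b c) : x ≠ a ∧ x ≠ b ∧ x ≠ c := by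
  unfold Vset at h
  simp only [mem_erase, mem_univ, and_true] at h
  tauto

variable (hZK : ∀ u v : Fin n, u ≠ v → ∑ s, ∑ t, Z u v s t = 0)

include hZK in
lemma Wzero (u v : Fin n) (huv : u ≠ v) : ∑ s, Df Z u s v = 0 := by
  simpa only [Df] using hZK u v huv

include hZK in
lemma Gsum (u v : Fin n) (huv : u ≠ v) : ∑ s, Gf Z u s v = - Tf Z u / 2 := by
  simp only [Gf]
  rw [Finset.sum_sub_distrib, ← Finset.mul_sum, Wzero hZK u v huv, ← Finset.sum_div]
  simp only [Tf]
  ring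

lemma Gsum2 (a c : Fin n) : ∑ d, Gf Z a c d = ((n:ℚ) - 6) / 2 * sf Z a c := by
  simp only [Gf]
  rw [Finset.sum_sub_distrib, ← Finset.mul_sum, ← Finset.sum_div, Finset.sum_const, card_univ,
    Fintype.card_fin, nsmul_eq_mul]
  simp only [sf]
  ring

include hZ0 in
lemma Gf_zero1 (a c : Fin n) : Gf Z a c a = - sf Z a c / 2 := by
  simp only [Gf, Df_zero1 hZ0]; ring

include hZ0 in
lemma Gf_zero2 (a c : Fin n) : Gf Z a c c = - sf Z a c / 2 := by
  simp only [Gf, Df_zero2 hZ0]; ring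

include hZ0 in
lemma Gf_zero3 (a b : Fin n) : Gf Z a a b = 0 := by
  simp only [Gf, Df_zero3 hZ0, sf_zero hZ0]; ring

include hZs2 in
lemma Gf_symm (a c b : Fin n) : Gf Z a c b = Gf Z c a b := by
  simp only [Gf, Df_symm hZs2 a c b, sf_symm hZs2 a c]

variable (hZs3 : ∀ a b c d : Fin n, Z a b c d = Z b c d a)

include hZ0 hZs1 hZs3 hZH in
lemma IIIpre (hn : 6 ≤ n) {a b c d : Fin n} (hab : a ≠ b) (hac : a ≠ c) (had : a ≠ d)
    (hbc : b ≠ c) (hbd : b ≠ d) (hcd : c ≠ d) :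
    Gf Z a c b + Gf Z a c d = Gf Z b d a + Gf Z b d c := by
  have h1 := Rprime hZ0 hZs1 hZH hn hab hac had hbc hbd hcd
  have h2 := Rprime hZ0 hZs1 hZH hn hbc hbd hab.symm hcd hac.symm had.symm
  have h3 := hZs3 a b c d
  linear_combination -h1 + h2 + ((n:ℚ)-3)*((n:ℚ)-4)*h3

include hZ0 hZs1 hZs2 hZs3 hZH hZK in
lemma IIstar (hn : 6 ≤ n) {a b c : Fin n} (hab : a ≠ b) (hac : a ≠ c) (hbc : b ≠ c) :
    ((n:ℚ)-4) * Gf Z a c b + Gf Z a b c + Gf Z b c a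
      = - Tf Z b + (sf Z a b + sf Z b c)/2 - ((n:ℚ)-4) * sf Z a c / 2 := by
  set W := Vset a b c with hW
  have hcardW : ((W.card : ℚ)) = (n:ℚ) - 3 := by
    rw [hW, card_Vset hab hac hbc, Nat.cast_sub (by omega)]; norm_num
  have key : ∀ d ∈ W, Gf Z a c b + Gf Z a c d = Gf Z b d a + Gf Z b d c := by
    intro d hd
    obtain ⟨hda, hdb, hdc⟩ := mem_Vset hd
    exact IIIpre hZ0 hZs1 hZH hZs3 hn hab hac hda.symm hbc hdb.symm hdc.symm
  have main : (∑ d ∈ W, Gf Z a c b) + (∑ d ∈ W, Gf Z a c d)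
      = (∑ d ∈ W, Gf Z b d a) + (∑ d ∈ W, Gf Z b d c) := by
    rw [← Finset.sum_add_distrib, ← Finset.sum_add_distrib]
    exact Finset.sum_congr rfl key
  have Q1 : ∑ d ∈ W, Gf Z a c b = ((n:ℚ)-3) * Gf Z a c b := by
    rw [Finset.sum_const, nsmul_eq_mul, hcardW]
  have Q2 : ∑ d ∈ W, Gf Z a c d
      = ((n:ℚ)-6)/2 * sf Z a c + sf Z a c - Gf Z a c b := by
    rw [hW, sum_Vset (fun d => Gf Z a c d) hab hac hbc, Gsum2, Gf_zero1 hZ0, Gf_zero2 hZ0]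
    ring
  have Q3 : ∑ d ∈ W, Gf Z b d a = - Tf Z b / 2 + sf Z a b / 2 - Gf Z b c a := by
    rw [hW, sum_Vset (fun d => Gf Z b d a) hab hac hbc, Gsum hZK b a hab.symm,
      Gf_zero2 hZ0 b a, Gf_zero3 hZ0 b a, sf_symm hZs2 b a]
    ring
  have Q4 : ∑ d ∈ W, Gf Z b d c = - Tf Z b / 2 + sf Z b c / 2 - Gf Z a b c := by
    rw [hW, sum_Vset (fun d => Gf Z b d c) hab hac hbc, Gsum hZK b c hbc,
      Gf_symm hZs2 b a c, Gf_zero3 hZ0 b c, Gf_zero2 hZ0 b c]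
    ring
  linear_combination main - Q1 - Q2 + Q3 + Q4

include hZ0 hZs1 hZs2 hZH hZK hZs3 in
lemma IIdstar (hn : 6 ≤ n) {a b c : Fin n} (hab : a ≠ b) (hac : a ≠ c) (hbc : b ≠ c) :
    ((n:ℚ)-2) * (((n:ℚ)-5) * Gf Z a c b)
      = Tf Z a + Tf Z c - ((n:ℚ)-3) * Tf Z b + ((n:ℚ)-4)*(sf Z a b + sf Z b c)
        - ((n:ℚ)^2 - 7*(n:ℚ) + 14) * sf Z a c / 2 := by
  have Ib := IIstar hZ0 hZs1 hZs2 hZH hZK hZs3 hn hab hac hbc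
  have Ic := IIstar hZ0 hZs1 hZs2 hZH hZK hZs3 hn hac hab hbc.symm
  have Ia := IIstar hZ0 hZs1 hZs2 hZH hZK hZs3 hn hab.symm hbc hac
  rw [Gf_symm hZs2 c b a, sf_symm hZs2 c b] at Ic
  rw [Gf_symm hZs2 b a c, sf_symm hZs2 b a] at Ia
  linear_combination ((n:ℚ)-3) * Ib - Ic - Ia

include hZ0 hZs1 hZs2 hZH hZK hZs3 in
lemma IIIstar (hn : 6 ≤ n) {a b c d : Fin n} (hab : a ≠ b) (hac : a ≠ c) (had : a ≠ d)
    (hbc : b ≠ c) (hbd : b ≠ d) (hcd : c ≠ d) :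
    ((n:ℚ)^2 - 7*(n:ℚ) + 14) * (sf Z a c - sf Z b d)
      = ((n:ℚ)-1) * (Tf Z a + Tf Z c - Tf Z b - Tf Z d) := by
  have h0 := IIIpre hZ0 hZs1 hZH hZs3 hn hab hac had hbc hbd hcd
  have K1 := IIdstar hZ0 hZs1 hZs2 hZH hZK hZs3 hn hab hac hbc
  have K2 := IIdstar hZ0 hZs1 hZs2 hZH hZK hZs3 hn had hac hcd.symm
  have K3 := IIdstar hZ0 hZs1 hZs2 hZH hZK hZs3 hn hab.symm hbd had
  have K4 := IIdstar hZ0 hZs1 hZs2 hZH hZK hZs3 hn hbc hbd hcd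
  rw [sf_symm hZs2 d c] at K2
  rw [sf_symm hZs2 b a] at K3
  linear_combination K1 + K2 - K3 - K4 - ((n:ℚ)-2)*((n:ℚ)-5)*h0

lemma exists_fresh (hn : 6 ≤ n) (p q r s : Fin n) :
    ∃ e f : Fin n, e ≠ f ∧ e ≠ p ∧ e ≠ q ∧ e ≠ r ∧ e ≠ s ∧ f ≠ p ∧ f ≠ q ∧ f ≠ r ∧ f ≠ s := by
  have h4 : ({p,q,r,s} : Finset (Fin n)).card ≤ 4 := by
    apply le_trans (Finset.card_insert_le _ _)
    apply Nat.succ_le_succ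
    apply le_trans (Finset.card_insert_le _ _)
    apply Nat.succ_le_succ
    apply le_trans (Finset.card_insert_le _ _)
    apply Nat.succ_le_succ
    simp
  have h2 : 1 < (univ \ ({p,q,r,s} : Finset (Fin n))).card := by
    rw [Finset.card_sdiff_of_subset (subset_univ _), card_univ, Fintype.card_fin]; omega
  obtain ⟨e, he, f, hf, hef⟩ := Finset.one_lt_card.mp h2
  simp only [mem_sdiff, mem_univ, true_and, mem_insert, mem_singleton, not_or] at he hf
  exact ⟨e, f, hef, he.1, he.2.1, he.2.2.1, he.2.2.2, hf.1, hf.2.1, hf.2.2.1, hf.2.2.2⟩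

include hZ0 hZs1 hZs2 hZH hZK hZs3 in
lemma Fconst (hn : 6 ≤ n) {p q r s : Fin n} (hpq : p ≠ q) (hrs : r ≠ s) :
    ((n:ℚ)^2 - 7*(n:ℚ) + 14) * sf Z p q - ((n:ℚ)-1) * (Tf Z p + Tf Z q)
      = ((n:ℚ)^2 - 7*(n:ℚ) + 14) * sf Z r s - ((n:ℚ)-1) * (Tf Z r + Tf Z s) := by
  obtain ⟨e,f,hef,hep,heq,her,hes,hfp,hfq,hfr,hfs⟩ := exists_fresh hn p q r s
  have h1 := IIIstar hZ0 hZs1 hZs2 hZH hZK hZs3 hn hep.symm hpq hfp.symm heq hef hfq.symm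
  have h2 := IIIstar hZ0 hZs1 hZs2 hZH hZK hZs3 hn her.symm hrs hfr.symm hes hef hfs.symm
  linear_combination h1 - h2

include hZ0 hZs1 hZs2 hZH hZK hZs3 in
lemma Tconst (hn : 6 ≤ n) (u w : Fin n) : Tf Z u = Tf Z w := by
  obtain ⟨p₀, q₀, hpq⟩ : ∃ p q : Fin n, p ≠ q :=
    ⟨⟨0, by omega⟩, ⟨1, by omega⟩, by simp [Fin.ext_iff]⟩
  set Mu := ((n:ℚ)^2 - 7*(n:ℚ) + 14) * sf Z p₀ q₀ - ((n:ℚ)-1) * (Tf Z p₀ + Tf Z q₀) with hMu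
  set Theta := ∑ u, Tf Z u with hTheta
  have hc : ((n - 1 : ℕ) : ℚ) = (n:ℚ) - 1 := by rw [Nat.cast_sub (by omega)]; norm_num
  have key : ∀ b : Fin n, ((n:ℚ)^2-7*(n:ℚ)+14) * Tf Z b
      = ((n:ℚ)-1) * Mu + ((n:ℚ)-1)*(((n:ℚ)-2) * Tf Z b + Theta) := by
    intro b
    have hsum : ∀ s ∈ univ.erase b,
        ((n:ℚ)^2-7*(n:ℚ)+14) * sf Z b s = Mu + ((n:ℚ)-1)*(Tf Z b + Tf Z s) := by
      intro s hs
      have hbs : b ≠ s := Ne.symm (mem_erase.mp hs).1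
      have h := Fconst hZ0 hZs1 hZs2 hZH hZK hZs3 hn hbs hpq
      rw [hMu]
      linear_combination h
    have hcongr := Finset.sum_congr rfl hsum
    have e1 : ∑ s ∈ univ.erase b, ((n:ℚ)^2-7*(n:ℚ)+14) * sf Z b s
        = ((n:ℚ)^2-7*(n:ℚ)+14) * Tf Z b := by
      rw [← Finset.mul_sum, Finset.sum_erase_eq_sub (mem_univ b), sf_zero hZ0]
      simp only [Tf]; ring
    have e2 : ∑ s ∈ univ.erase b, (Mu + ((n:ℚ)-1)*(Tf Z b + Tf Z s))
        = ((n:ℚ)-1)*Mu + ((n:ℚ)-1)*(((n:ℚ)-2)*Tf Z b + Theta) := by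
      rw [Finset.sum_add_distrib, Finset.sum_const, Finset.card_erase_of_mem (mem_univ b),
        card_univ, Fintype.card_fin, nsmul_eq_mul, hc, ← Finset.mul_sum,
        Finset.sum_add_distrib, Finset.sum_const, Finset.card_erase_of_mem (mem_univ b),
        card_univ, Fintype.card_fin, nsmul_eq_mul, hc,
        Finset.sum_erase_eq_sub (mem_univ b), hTheta]
      simp only [Tf]
      ring
    linear_combination hcongr - e1 + e2
  have hu := key u
  have hw := key w
  have hfac : (-4*(n:ℚ)+12) * (Tf Z u - Tf Z w) = 0 := by linear_combination hu - hw
  have hN : (6:ℚ) ≤ (n:ℚ) := by exact_mod_cast hn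
  have h1 : (-4*(n:ℚ)+12) ≠ 0 := by
    have : (-4*(n:ℚ)+12) < 0 := by linarith
    exact this.ne
  have := (mul_eq_zero.mp hfac).resolve_left h1
  linarith [this]

def Pset (a b : Fin n) : Finset (Fin n) := (univ.erase a).erase b

lemma sum_Pset (f : Fin n → ℚ) {a b : Fin n} (hab : a ≠ b) :
    ∑ x ∈ Pset a b, f x = (∑ x, f x) - f a - f b := by
  unfold Pset
  rw [Finset.sum_erase_eq_sub (by simp [mem_erase, hab.symm]),
    Finset.sum_erase_eq_sub (mem_univ a)]

lemma card_Pset {a b : Fin n} (hab : a ≠ b) : (Pset a b).card = n - 2 := by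
  unfold Pset
  rw [Finset.card_erase_of_mem (by simp [mem_erase, hab.symm]),
    Finset.card_erase_of_mem (mem_univ a), card_univ, Fintype.card_fin]
  omega

lemma mem_Pset {x a b : Fin n} (h : x ∈ Pset a b) : x ≠ a ∧ x ≠ b := by
  unfold Pset at h
  simp only [mem_erase, mem_univ, and_true] at h
  tauto

include hZ0 hZs1 hZs2 hZH hZK hZs3 in
lemma mainZ (hn : 6 ≤ n) : ∀ a b c d : Fin n, Z a b c d = 0 := by
  have hN : (6:ℚ) ≤ (n:ℚ) := by exact_mod_cast hn
  obtain ⟨p₀, q₀, hpq⟩ : ∃ p q : Fin n, p ≠ q :=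
    ⟨⟨0, by omega⟩, ⟨1, by omega⟩, by simp [Fin.ext_iff]⟩
  set σ₀ := sf Z p₀ q₀ with hσ₀
  -- all T values are equal, and all sf values on distinct pairs equal σ₀
  have hsconst : ∀ p q : Fin n, p ≠ q → sf Z p q = σ₀ := by
    intro p q hpq'
    have h1 := Fconst hZ0 hZs1 hZs2 hZH hZK hZs3 hn hpq' hpq
    have hT1 := Tconst hZ0 hZs1 hZs2 hZH hZK hZs3 hn p p₀
    have hT2 := Tconst hZ0 hZs1 hZs2 hZH hZK hZs3 hn q q₀
    have hQpos : (0:ℚ) < (n:ℚ)^2 - 7*(n:ℚ) + 14 := by nlinarith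
    have hz : ((n:ℚ)^2-7*(n:ℚ)+14) * (sf Z p q - σ₀) = 0 := by
      rw [hσ₀]
      linear_combination h1 + ((n:ℚ)-1)*hT1 + ((n:ℚ)-1)*hT2
    have := (mul_eq_zero.mp hz).resolve_left hQpos.ne'
    linarith [this]
  have hc1 : ((n - 1 : ℕ) : ℚ) = (n:ℚ) - 1 := by rw [Nat.cast_sub (by omega)]; norm_num
  have hTc : ∀ u : Fin n, Tf Z u = ((n:ℚ)-1) * σ₀ := by
    intro u
    have step : ∑ s ∈ univ.erase u, sf Z u s = Tf Z u := by
      rw [Finset.sum_erase_eq_sub (mem_univ u), sf_zero hZ0]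
      simp only [Tf]; ring
    have step2 : ∑ s ∈ univ.erase u, sf Z u s = ((n:ℚ)-1) * σ₀ := by
      rw [Finset.sum_congr rfl (fun s hs => hsconst u s (Ne.symm (mem_erase.mp hs).1)),
        Finset.sum_const, Finset.card_erase_of_mem (mem_univ u), card_univ, Fintype.card_fin,
        nsmul_eq_mul, hc1]
    rw [← step, step2]
  have hGc : ∀ a c b : Fin n, a ≠ b → a ≠ c → b ≠ c →
      ((n:ℚ)-2)*(((n:ℚ)-5) * Gf Z a c b) = (-3*(n:ℚ)^2+23*(n:ℚ)-40)/2 * σ₀ := by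
    intro a c b hab hac hbc
    have h := IIdstar hZ0 hZs1 hZs2 hZH hZK hZs3 hn hab hac hbc
    rw [hTc a, hTc b, hTc c, hsconst a b hab, hsconst b c hbc, hsconst a c hac] at h
    linear_combination h
  have hZc : ∀ a b c d : Fin n, a≠b → a≠c → a≠d → b≠c → b≠d → c≠d →
      ((n:ℚ)-2)*(((n:ℚ)-5)*(((n:ℚ)-3)*(((n:ℚ)-4) * Z a b c d)))
        = (-3*(n:ℚ)^2+23*(n:ℚ)-40) * σ₀ := by
    intro a b c d hab hac had hbc hbd hcd
    have h1 := Rprime hZ0 hZs1 hZH hn hab hac had hbc hbd hcd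
    have h2 := hGc a c b hab hac hbc
    have h3 := hGc a c d had hac hcd.symm
    linear_combination ((n:ℚ)-2)*((n:ℚ)-5)*h1 + h2 + h3
  -- step 12: sum the constant value over a fiber to get a constraint on σ₀
  have hc3 : ((n - 3 : ℕ) : ℚ) = (n:ℚ) - 3 := by rw [Nat.cast_sub (by omega)]; norm_num
  have hc2 : ((n - 2 : ℕ) : ℚ) = (n:ℚ) - 2 := by rw [Nat.cast_sub (by omega)]; norm_num
  have inner : ∀ b : Fin n, b ≠ p₀ → b ≠ q₀ →
      ∑ d, (((n:ℚ)-2)*(((n:ℚ)-5)*(((n:ℚ)-3)*(((n:ℚ)-4) * Z p₀ b q₀ d))))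
        = ((n:ℚ)-3) * ((-3*(n:ℚ)^2+23*(n:ℚ)-40) * σ₀) := by
    intro b hbp hbq
    have hsplit := sum_Vset (fun d => ((n:ℚ)-2)*(((n:ℚ)-5)*(((n:ℚ)-3)*(((n:ℚ)-4) * Z p₀ b q₀ d))))
      hpq hbp.symm hbq.symm
    rw [hZ0 p₀ b q₀ p₀ (by tauto), hZ0 p₀ b q₀ q₀ (by tauto), hZ0 p₀ b q₀ b (by tauto)] at hsplit
    have hval : ∑ d ∈ Vset p₀ q₀ b, (((n:ℚ)-2)*(((n:ℚ)-5)*(((n:ℚ)-3)*(((n:ℚ)-4) * Z p₀ b q₀ d))))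
        = ((n:ℚ)-3) * ((-3*(n:ℚ)^2+23*(n:ℚ)-40) * σ₀) := by
      rw [Finset.sum_congr rfl (fun d hd => by
        obtain ⟨hdp, hdq, hdb⟩ := mem_Vset hd
        exact hZc p₀ b q₀ d hbp.symm hpq hdp.symm hbq hdb.symm hdq.symm),
        Finset.sum_const, card_Vset hpq hbp.symm hbq.symm, nsmul_eq_mul, hc3]
    rw [hval] at hsplit
    linarith [hsplit]
  have houter : ((n:ℚ)-2)*(((n:ℚ)-5)*(((n:ℚ)-3)*(((n:ℚ)-4) * σ₀)))
      = (((n:ℚ)-2) * (((n:ℚ)-3) * ((-3*(n:ℚ)^2+23*(n:ℚ)-40) * σ₀))) := by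
    have lhs_eq : ∑ b, ∑ d, (((n:ℚ)-2)*(((n:ℚ)-5)*(((n:ℚ)-3)*(((n:ℚ)-4) * Z p₀ b q₀ d))))
        = ((n:ℚ)-2)*(((n:ℚ)-5)*(((n:ℚ)-3)*(((n:ℚ)-4) * σ₀))) := by
      simp only [← Finset.mul_sum]
      rw [hσ₀]
      simp only [sf, Df]
    have hsplit := sum_Pset (fun b => ∑ d,
        (((n:ℚ)-2)*(((n:ℚ)-5)*(((n:ℚ)-3)*(((n:ℚ)-4) * Z p₀ b q₀ d))))) hpq
    have hz1 : ∑ d, (((n:ℚ)-2)*(((n:ℚ)-5)*(((n:ℚ)-3)*(((n:ℚ)-4) * Z p₀ p₀ q₀ d)))) = 0 := by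
      apply Finset.sum_eq_zero
      intro d _
      simp [hZ0 p₀ p₀ q₀ d (by tauto)]
    have hz2 : ∑ d, (((n:ℚ)-2)*(((n:ℚ)-5)*(((n:ℚ)-3)*(((n:ℚ)-4) * Z p₀ q₀ q₀ d)))) = 0 := by
      apply Finset.sum_eq_zero
      intro d _
      simp [hZ0 p₀ q₀ q₀ d (by tauto)]
    have hPval : ∑ b ∈ Pset p₀ q₀, (∑ d,
        (((n:ℚ)-2)*(((n:ℚ)-5)*(((n:ℚ)-3)*(((n:ℚ)-4) * Z p₀ b q₀ d)))))
        = ((n:ℚ)-2) * (((n:ℚ)-3) * ((-3*(n:ℚ)^2+23*(n:ℚ)-40) * σ₀)) := by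
      rw [Finset.sum_congr rfl (fun b hb => by
        obtain ⟨hbp, hbq⟩ := mem_Pset hb
        exact inner b hbp hbq),
        Finset.sum_const, card_Pset hpq, nsmul_eq_mul, hc2]
    rw [hz1, hz2, hPval] at hsplit
    rw [← lhs_eq]
    linarith [hsplit]
  have hσz : σ₀ = 0 := by
    have hfac : ((((n:ℚ)-2))*((((n:ℚ)-3))*((((n:ℚ)-3))*((((n:ℚ)-5))*4)))) * σ₀ = 0 := by
      linear_combination houter
    have hpos : (0:ℚ) < ((((n:ℚ)-2))*((((n:ℚ)-3))*((((n:ℚ)-3))*((((n:ℚ)-5))*4)))) := by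
      have h2 : (0:ℚ) < (n:ℚ)-2 := by linarith
      have h3 : (0:ℚ) < (n:ℚ)-3 := by linarith
      have h5 : (0:ℚ) < (n:ℚ)-5 := by linarith
      positivity
    exact (mul_eq_zero.mp hfac).resolve_left hpos.ne'
  intro a b c d
  by_cases h : a≠b ∧ a≠c ∧ a≠d ∧ b≠c ∧ b≠d ∧ c≠d
  · obtain ⟨hab, hac, had, hbc, hbd, hcd⟩ := h
    have h1 := hZc a b c d hab hac had hbc hbd hcd
    rw [hσz, mul_zero] at h1
    have h2 : (((n:ℚ)-2)*(((n:ℚ)-5)*(((n:ℚ)-3)*((n:ℚ)-4)))) * Z a b c d = 0 := by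
      linear_combination h1
    have hpos : (0:ℚ) < (((n:ℚ)-2)*(((n:ℚ)-5)*(((n:ℚ)-3)*((n:ℚ)-4)))) := by
      have h2' : (0:ℚ) < (n:ℚ)-2 := by linarith
      have h3' : (0:ℚ) < (n:ℚ)-3 := by linarith
      have h4' : (0:ℚ) < (n:ℚ)-4 := by linarith
      have h5' : (0:ℚ) < (n:ℚ)-5 := by linarith
      positivity
    exact (mul_eq_zero.mp h2).resolve_left hpos.ne'
  · exact hZ0 a b c d (by tauto)

end ZSection

lemma mem_cycleEdges {n : ℕ} (a b c d : Fin n) (x : Sym2 (Fin n)) :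
    x ∈ cycleEdges n a b c d ↔ x = s(a,b) ∨ x = s(b,c) ∨ x = s(c,d) ∨ x = s(d,a) := by
  simp [cycleEdges]

lemma cycleEdges_rot {n : ℕ} (a b c d : Fin n) : cycleEdges n a b c d = cycleEdges n b c d a := by
  ext x; simp only [mem_cycleEdges]; tauto

lemma cycleEdges_rev {n : ℕ} (a b c d : Fin n) : cycleEdges n a b c d = cycleEdges n a d c b := by
  ext x
  simp only [mem_cycleEdges]
  rw [show s(a,d) = s(d,a) from Sym2.eq_swap, show s(d,c) = s(c,d) from Sym2.eq_swap,
    show s(c,b) = s(b,c) from Sym2.eq_swap, show s(b,a) = s(a,b) from Sym2.eq_swap]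
  tauto

lemma cycleEdges_rot2 {n : ℕ} (a b c d : Fin n) : cycleEdges n a b c d = cycleEdges n c d a b :=
  (cycleEdges_rot a b c d).trans (cycleEdges_rot b c d a)

lemma cycleEdges_rot3 {n : ℕ} (a b c d : Fin n) : cycleEdges n a b c d = cycleEdges n d a b c :=
  (cycleEdges_rot2 a b c d).trans (cycleEdges_rot c d a b)

lemma cycleEdges_swap {n : ℕ} (a b c d : Fin n) : cycleEdges n a b c d = cycleEdges n c b a d :=
  (cycleEdges_rot2 a b c d).trans (cycleEdges_rev c d a b)

lemma cycleEdges_revrot {n : ℕ} (a b c d : Fin n) : cycleEdges n a b c d = cycleEdges n b a d c :=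
  (cycleEdges_rot a b c d).trans (cycleEdges_rev b c d a)

lemma cycleEdges_revrot3 {n : ℕ} (a b c d : Fin n) : cycleEdges n a b c d = cycleEdges n d c b a :=
  (cycleEdges_rot3 a b c d).trans (cycleEdges_rev d a b c)

lemma nodup4_iff {n : ℕ} {a b c d : Fin n} :
    ([a,b,c,d] : List (Fin n)).Nodup ↔ a≠b ∧ a≠c ∧ a≠d ∧ b≠c ∧ b≠d ∧ c≠d := by
  simp [List.nodup_cons]; tauto

lemma nodup4_rot {n : ℕ} {a b c d : Fin n} :
    ([a,b,c,d] : List (Fin n)).Nodup ↔ ([b,c,d,a] : List (Fin n)).Nodup := by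
  simp [nodup4_iff, ne_comm]; tauto

lemma nodup4_rev {n : ℕ} {a b c d : Fin n} :
    ([a,b,c,d] : List (Fin n)).Nodup ↔ ([a,d,c,b] : List (Fin n)).Nodup := by
  simp [nodup4_iff, ne_comm]; tauto

lemma nodup4_swap {n : ℕ} {a b c d : Fin n} :
    ([a,b,c,d] : List (Fin n)).Nodup ↔ ([c,b,a,d] : List (Fin n)).Nodup := by
  simp [nodup4_iff, ne_comm]; tauto

lemma nodup6_iff {n : ℕ} {a b c d e f : Fin n} :
    ([a,b,c,d,e,f] : List (Fin n)).Nodup ↔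
      a≠b ∧ a≠c ∧ a≠d ∧ a≠e ∧ a≠f ∧ b≠c ∧ b≠d ∧ b≠e ∧ b≠f ∧ c≠d ∧ c≠e ∧ c≠f ∧
        d≠e ∧ d≠f ∧ e≠f := by
  simp [List.nodup_cons]; tauto

/-- injectivity of `(s,t) ↦ cycleEdges u v s t` for fixed `u v`. -/
lemma cycleEdges_inj2 {n : ℕ} {u v s t s' t' : Fin n}
    (h1 : ([u,v,s,t] : List (Fin n)).Nodup) (h2 : ([u,v,s',t'] : List (Fin n)).Nodup)
    (h : cycleEdges n u v s t = cycleEdges n u v s' t') : s = s' ∧ t = t' := by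
  obtain ⟨huv, hus, hut, hvs, hvt, hst⟩ := nodup4_iff.mp h1
  obtain ⟨_, hus', hut', hvs', hvt', hst'⟩ := nodup4_iff.mp h2
  have hs : s = s' := by
    have hm : s(v,s) ∈ cycleEdges n u v s' t' := by
      rw [← h, mem_cycleEdges]; tauto
    rw [mem_cycleEdges] at hm
    rcases hm with hh|hh|hh|hh <;> rw [Sym2.eq_iff] at hh <;>
      rcases hh with ⟨e1,e2⟩|⟨e1,e2⟩ <;> simp_all
  subst hs
  have ht : t = t' := by
    have hm : s(t,u) ∈ cycleEdges n u v s t' := by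
      rw [← h, mem_cycleEdges]; tauto
    rw [mem_cycleEdges] at hm
    rcases hm with hh|hh|hh|hh <;> rw [Sym2.eq_iff] at hh <;>
      rcases hh with ⟨e1,e2⟩|⟨e1,e2⟩ <;> simp_all
  exact ⟨rfl, ht⟩

def Zfun {n : ℕ} (z : {C : Finset (Sym2 (Fin n)) // IsFourCycle n C} → ℚ) (a b c d : Fin n) :
    ℚ :=
  if h : ([a,b,c,d] : List (Fin n)).Nodup then
    z ⟨cycleEdges n a b c d, ⟨a, b, c, d, h, rfl⟩⟩ else 0

lemma Zfun_eq {n : ℕ} (z : {C : Finset (Sym2 (Fin n)) // IsFourCycle n C} → ℚ) {a b c d : Fin n}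
    (h : ([a,b,c,d] : List (Fin n)).Nodup) (hC : IsFourCycle n (cycleEdges n a b c d)) :
    Zfun z a b c d = z ⟨cycleEdges n a b c d, hC⟩ := dif_pos h

lemma Zfun_zero {n : ℕ} (z : {C : Finset (Sym2 (Fin n)) // IsFourCycle n C} → ℚ)
    {a b c d : Fin n} (h : ¬ ([a,b,c,d] : List (Fin n)).Nodup) : Zfun z a b c d = 0 := dif_neg h

lemma Zfun_congr {n : ℕ} (z : {C : Finset (Sym2 (Fin n)) // IsFourCycle n C} → ℚ)
    {a b c d a' b' c' d' : Fin n}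
    (hnd : ([a,b,c,d] : List (Fin n)).Nodup ↔ ([a',b',c',d'] : List (Fin n)).Nodup)
    (hE : cycleEdges n a b c d = cycleEdges n a' b' c' d') :
    Zfun z a b c d = Zfun z a' b' c' d' := by
  by_cases h : ([a,b,c,d] : List (Fin n)).Nodup
  · have h' := hnd.mp h
    rw [Zfun_eq z h ⟨a,b,c,d,h,rfl⟩, Zfun_eq z h' ⟨a',b',c',d',h',rfl⟩]
    congr 1
    exact Subtype.ext hE
  · rw [Zfun_zero z h, Zfun_zero z (fun h' => h (hnd.mpr h'))]

lemma Zfun_s1 {n : ℕ} (z : {C : Finset (Sym2 (Fin n)) // IsFourCycle n C} → ℚ) (a b c d : Fin n) :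
    Zfun z a b c d = Zfun z a d c b :=
  Zfun_congr z nodup4_rev (cycleEdges_rev a b c d)

lemma Zfun_s2 {n : ℕ} (z : {C : Finset (Sym2 (Fin n)) // IsFourCycle n C} → ℚ) (a b c d : Fin n) :
    Zfun z a b c d = Zfun z c b a d :=
  Zfun_congr z nodup4_swap (cycleEdges_swap a b c d)

lemma Zfun_s3 {n : ℕ} (z : {C : Finset (Sym2 (Fin n)) // IsFourCycle n C} → ℚ) (a b c d : Fin n) :
    Zfun z a b c d = Zfun z b c d a :=
  Zfun_congr z nodup4_rot (cycleEdges_rot a b c d)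

lemma sum_ind2 {n : ℕ} (E : Finset (Sym2 (Fin n))) (hE : IsFourCycle n E)
    (w : {C : Finset (Sym2 (Fin n)) // IsFourCycle n C} → ℚ) :
    ∑ C : {C : Finset (Sym2 (Fin n)) // IsFourCycle n C}, w C * (if C.1 = E then (1:ℚ) else 0)
      = w ⟨E, hE⟩ := by
  rw [Finset.sum_eq_single (⟨E, hE⟩ : {C : Finset (Sym2 (Fin n)) // IsFourCycle n C})]
  · simp
  · intro C _ hne
    have hne' : ¬ (C.1 = E) := fun hh => hne (Subtype.ext hh)
    simp [hne']
  · intro hmem; exact absurd (Finset.mem_univ _) hmem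

lemma ZK_of_ker {n : ℕ} (z : {C : Finset (Sym2 (Fin n)) // IsFourCycle n C} → ℚ)
    (hz : (edgeCycleMatrix n).mulVecLin z = 0) (u v : Fin n) (huv : u ≠ v) :
    ∑ s, ∑ t, Zfun z u v s t = 0 := by
  have hd : ¬ (s(u,v) : Sym2 (Fin n)).IsDiag := by
    rw [Sym2.mk_isDiag_iff]; exact huv
  have h0 : ∑ C : {C : Finset (Sym2 (Fin n)) // IsFourCycle n C},
      (if s(u,v) ∈ C.1 then (1:ℚ) else 0) * z C = 0 := by
    have h := congrFun hz ⟨s(u,v), hd⟩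
    simpa [edgeCycleMatrix, Matrix.mulVecLin_apply, Matrix.mulVec, dotProduct] using h
  have h1 : ∑ C ∈ univ.filter
      (fun C : {C : Finset (Sym2 (Fin n)) // IsFourCycle n C} => s(u,v) ∈ C.1), z C = 0 := by
    rw [Finset.sum_filter]
    simpa [boole_mul] using h0
  have h2 : ∑ p ∈ (univ : Finset (Fin n × Fin n)).filter
      (fun p => ([u,v,p.1,p.2] : List (Fin n)).Nodup), Zfun z u v p.1 p.2
      = ∑ C ∈ univ.filter
        (fun C : {C : Finset (Sym2 (Fin n)) // IsFourCycle n C} => s(u,v) ∈ C.1), z C := by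
    refine Finset.sum_bij (fun p hp => ⟨cycleEdges n u v p.1 p.2,
      ⟨u, v, p.1, p.2, (Finset.mem_filter.mp hp).2, rfl⟩⟩) ?_ ?_ ?_ ?_
    · intro p hp
      simp only [Finset.mem_filter, Finset.mem_univ, true_and]
      rw [mem_cycleEdges]; tauto
    · intro p hp q hq hpq
      have hh := cycleEdges_inj2 (Finset.mem_filter.mp hp).2 (Finset.mem_filter.mp hq).2
        (congrArg Subtype.val hpq)
      exact Prod.ext hh.1 hh.2
    · intro C hC
      obtain ⟨a, b, c, d, hnd, hval⟩ := C.2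
      have hmem : s(u,v) ∈ C.1 := (Finset.mem_filter.mp hC).2
      rw [hval, mem_cycleEdges] at hmem
      obtain ⟨hab, hac, had, hbc, hbd, hcd⟩ := nodup4_iff.mp hnd
      rcases hmem with hh|hh|hh|hh <;> rw [Sym2.eq_iff] at hh <;>
        rcases hh with ⟨e1,e2⟩|⟨e1,e2⟩
      · refine ⟨(c,d), Finset.mem_filter.mpr ⟨Finset.mem_univ _, ?_⟩, Subtype.ext ?_⟩
        · show ([u,v,c,d] : List (Fin n)).Nodup
          rw [e1, e2]; exact hnd
        · show cycleEdges n u v c d = C.1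
          rw [e1, e2, hval]
      · refine ⟨(d,c), Finset.mem_filter.mpr ⟨Finset.mem_univ _, ?_⟩, Subtype.ext ?_⟩
        · show ([u,v,d,c] : List (Fin n)).Nodup
          rw [e1, e2]
          exact nodup4_iff.mpr ⟨hab.symm, hbd, hbc, had, hac, hcd.symm⟩
        · show cycleEdges n u v d c = C.1
          rw [e1, e2, hval]; exact (cycleEdges_revrot a b c d).symm
      · refine ⟨(d,a), Finset.mem_filter.mpr ⟨Finset.mem_univ _, ?_⟩, Subtype.ext ?_⟩
        · show ([u,v,d,a] : List (Fin n)).Nodup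
          rw [e1, e2]
          exact nodup4_iff.mpr ⟨hbc, hbd, hab.symm, hcd, hac.symm, had.symm⟩
        · show cycleEdges n u v d a = C.1
          rw [e1, e2, hval]; exact (cycleEdges_rot a b c d).symm
      · refine ⟨(a,d), Finset.mem_filter.mpr ⟨Finset.mem_univ _, ?_⟩, Subtype.ext ?_⟩
        · show ([u,v,a,d] : List (Fin n)).Nodup
          rw [e1, e2]
          exact nodup4_iff.mpr ⟨hbc.symm, hac.symm, hcd, hab.symm, hbd, had⟩
        · show cycleEdges n u v a d = C.1
          rw [e1, e2, hval]; exact (cycleEdges_swap a b c d).symm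
      · refine ⟨(a,b), Finset.mem_filter.mpr ⟨Finset.mem_univ _, ?_⟩, Subtype.ext ?_⟩
        · show ([u,v,a,b] : List (Fin n)).Nodup
          rw [e1, e2]
          exact nodup4_iff.mpr ⟨hcd, hac.symm, hbc.symm, had.symm, hbd.symm, hab⟩
        · show cycleEdges n u v a b = C.1
          rw [e1, e2, hval]; exact (cycleEdges_rot2 a b c d).symm
      · refine ⟨(b,a), Finset.mem_filter.mpr ⟨Finset.mem_univ _, ?_⟩, Subtype.ext ?_⟩
        · show ([u,v,b,a] : List (Fin n)).Nodup
          rw [e1, e2]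
          exact nodup4_iff.mpr ⟨hcd.symm, hbd.symm, had.symm, hbc.symm, hac.symm, hab.symm⟩
        · show cycleEdges n u v b a = C.1
          rw [e1, e2, hval]; exact (cycleEdges_revrot3 a b c d).symm
      · refine ⟨(b,c), Finset.mem_filter.mpr ⟨Finset.mem_univ _, ?_⟩, Subtype.ext ?_⟩
        · show ([u,v,b,c] : List (Fin n)).Nodup
          rw [e1, e2]
          exact nodup4_iff.mpr ⟨had.symm, hbd.symm, hcd.symm, hab, hac, hbc⟩
        · show cycleEdges n u v b c = C.1
          rw [e1, e2, hval]; exact (cycleEdges_rot3 a b c d).symm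
      · refine ⟨(c,b), Finset.mem_filter.mpr ⟨Finset.mem_univ _, ?_⟩, Subtype.ext ?_⟩
        · show ([u,v,c,b] : List (Fin n)).Nodup
          rw [e1, e2]
          exact nodup4_iff.mpr ⟨had, hac, hab, hcd.symm, hbd.symm, hbc.symm⟩
        · show cycleEdges n u v c b = C.1
          rw [e1, e2, hval]; exact (cycleEdges_rev a b c d).symm
    · intro p hp
      exact Zfun_eq z (Finset.mem_filter.mp hp).2 _
  have h3 : ∑ s : Fin n, ∑ t : Fin n, Zfun z u v s t
      = ∑ p ∈ (univ : Finset (Fin n × Fin n)).filter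
        (fun p => ([u,v,p.1,p.2] : List (Fin n)).Nodup), Zfun z u v p.1 p.2 := by
    rw [← Fintype.sum_prod_type']
    rw [← Finset.sum_filter_add_sum_filter_not univ
      (fun p : Fin n × Fin n => ([u,v,p.1,p.2] : List (Fin n)).Nodup)
      (fun p => Zfun z u v p.1 p.2)]
    have hzero : ∑ p ∈ univ.filter
        (fun p : Fin n × Fin n => ¬ ([u,v,p.1,p.2] : List (Fin n)).Nodup),
        Zfun z u v p.1 p.2 = 0 :=
      Finset.sum_eq_zero (fun p hp => Zfun_zero z (Finset.mem_filter.mp hp).2)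
    rw [hzero, add_zero]
  rw [h3, h2]
  exact h1

lemma sum_ind1 {n : ℕ} (E : Finset (Sym2 (Fin n))) (hE : IsFourCycle n E)
    (w : {C : Finset (Sym2 (Fin n)) // IsFourCycle n C} → ℚ) :
    ∑ C : {C : Finset (Sym2 (Fin n)) // IsFourCycle n C}, (if C.1 = E then (1:ℚ) else 0) * w C
      = w ⟨E, hE⟩ := by
  rw [Finset.sum_eq_single (⟨E, hE⟩ : {C : Finset (Sym2 (Fin n)) // IsFourCycle n C})]
  · simp
  · intro C _ hne
    have hne' : ¬ (C.1 = E) := fun hh => hne (Subtype.ext hh)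
    simp [hne']
  · intro hmem; exact absurd (Finset.mem_univ _) hmem

lemma indicator_combine (P1 P2 P3 P4 : Prop) [Decidable P1] [Decidable P2] [Decidable P3]
    [Decidable P4] (key1 : P1 ∨ P2 ↔ P3 ∨ P4) (k2 : ¬(P1 ∧ P2)) (k3 : ¬(P3 ∧ P4)) :
    (if P1 then (1:ℚ) else 0) + (if P2 then 1 else 0) - (if P3 then 1 else 0)
      - (if P4 then 1 else 0) = 0 := by
  by_cases m1 : P1 <;> by_cases m2 : P2 <;> by_cases m3 : P3 <;> by_cases m4 : P4 <;>
    simp only [m1, m2, m3, m4, if_true, if_false] <;> (try norm_num) <;> tauto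

lemma dd_mem_ker {n : ℕ} (a b c d e f : Fin n) (hnd : ([a,b,c,d,e,f] : List (Fin n)).Nodup) :
    (edgeCycleMatrix n).mulVecLin (doubleDiamondVec n a b c d e f) = 0 := by
  obtain ⟨hab, hac, had, hae, haf, hbc, hbd, hbe, hbf, hcd, hce, hcf, hde, hdf, hef⟩ :=
    nodup6_iff.mp hnd
  have h1 : IsFourCycle n (cycleEdges n a b c d) :=
    ⟨a,b,c,d, nodup4_iff.mpr ⟨hab,hac,had,hbc,hbd,hcd⟩, rfl⟩
  have h2 : IsFourCycle n (cycleEdges n a e c f) :=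
    ⟨a,e,c,f, nodup4_iff.mpr ⟨hae,hac,haf,hce.symm,hef,hcf⟩, rfl⟩
  have h3 : IsFourCycle n (cycleEdges n a b c f) :=
    ⟨a,b,c,f, nodup4_iff.mpr ⟨hab,hac,haf,hbc,hbf,hcf⟩, rfl⟩
  have h4 : IsFourCycle n (cycleEdges n a e c d) :=
    ⟨a,e,c,d, nodup4_iff.mpr ⟨hae,hac,had,hce.symm,hde.symm,hcd⟩, rfl⟩
  funext ε
  show ∑ C : {C : Finset (Sym2 (Fin n)) // IsFourCycle n C},
    (if ε.1 ∈ C.1 then (1:ℚ) else 0) * (doubleDiamondVec n a b c d e f) C = 0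
  simp only [doubleDiamondVec, mul_add, mul_sub, Finset.sum_add_distrib,
    Finset.sum_sub_distrib]
  rw [sum_ind2 _ h1 _, sum_ind2 _ h2 _, sum_ind2 _ h3 _, sum_ind2 _ h4 _]
  have key1 : (ε.1 ∈ cycleEdges n a b c d ∨ ε.1 ∈ cycleEdges n a e c f)
      ↔ (ε.1 ∈ cycleEdges n a b c f ∨ ε.1 ∈ cycleEdges n a e c d) := by
    simp only [mem_cycleEdges]; tauto
  have k2 : ¬(ε.1 ∈ cycleEdges n a b c d ∧ ε.1 ∈ cycleEdges n a e c f) := by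
    simp only [mem_cycleEdges]
    rintro ⟨hx|hx|hx|hx, hy|hy|hy|hy⟩ <;>
      (have heq := hx.symm.trans hy; rw [Sym2.eq_iff] at heq;
       rcases heq with ⟨e1,e2⟩|⟨e1,e2⟩ <;> simp_all)
  have k3 : ¬(ε.1 ∈ cycleEdges n a b c f ∧ ε.1 ∈ cycleEdges n a e c d) := by
    simp only [mem_cycleEdges]
    rintro ⟨hx|hx|hx|hx, hy|hy|hy|hy⟩ <;>
      (have heq := hx.symm.trans hy; rw [Sym2.eq_iff] at heq;
       rcases heq with ⟨e1,e2⟩|⟨e1,e2⟩ <;> simp_all)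
  exact indicator_combine _ _ _ _ key1 k2 k3

def dotB (ι : Type) [Fintype ι] : LinearMap.BilinForm ℚ (ι → ℚ) :=
  LinearMap.mk₂ ℚ (fun x y => ∑ i, x i * y i)
    (fun x x' y => by simp [add_mul, Finset.sum_add_distrib])
    (fun c x y => by simp [Finset.mul_sum, mul_assoc])
    (fun x y y' => by simp [mul_add, Finset.sum_add_distrib])
    (fun c x y => by simp [Finset.mul_sum, mul_comm, mul_assoc, mul_left_comm])

lemma dotB_apply (ι : Type) [Fintype ι] (x y : ι → ℚ) : dotB ι x y = ∑ i, x i * y i := rfl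

lemma dotB_refl (ι : Type) [Fintype ι] : (dotB ι).IsRefl := by
  intro x y h
  show ∑ i, y i * x i = 0
  rw [Finset.sum_congr rfl fun i _ => mul_comm (y i) (x i)]
  exact h

lemma dotB_restrict_nondeg (ι : Type) [Fintype ι] (W : Submodule ℚ (ι → ℚ)) :
    ((dotB ι).restrict W).Nondegenerate := by
  refine ⟨fun x hx => ?_, fun x hx => ?_⟩
  all_goals
    have h0 : ∑ j, x.1 j * x.1 j = 0 := hx x
    have hz : ∀ i, x.1 i = 0 := by
      intro i
      exact mul_self_eq_zero.mp
        ((Finset.sum_eq_zero_iff_of_nonneg (fun j _ => mul_self_nonneg (x.1 j))).mp h0 i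
          (Finset.mem_univ i))
    exact Subtype.ext (funext hz)


/-- For `n ≥ 6`, the signed frequency vectors of the double-diamonds of `K_n` span the
kernel of the edge–4-cycle incidence matrix over `ℚ`. -/
theorem doubleDiamonds_span_ker (n : ℕ) (hn : 6 ≤ n) :
    Submodule.span ℚ
      {X : {C : Finset (Sym2 (Fin n)) // IsFourCycle n C} → ℚ |
        ∃ a b c d e f : Fin n, [a, b, c, d, e, f].Nodup ∧
          X = doubleDiamondVec n a b c d e f} =
      LinearMap.ker (edgeCycleMatrix n).mulVecLin := by
  have hle : Submodule.span ℚ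
      {X : {C : Finset (Sym2 (Fin n)) // IsFourCycle n C} → ℚ |
        ∃ a b c d e f : Fin n, [a, b, c, d, e, f].Nodup ∧
          X = doubleDiamondVec n a b c d e f} ≤
      LinearMap.ker (edgeCycleMatrix n).mulVecLin := by
    rw [Submodule.span_le]
    rintro X ⟨a,b,c,d,e,f,hnd,rfl⟩
    rw [SetLike.mem_coe, LinearMap.mem_ker]
    exact dd_mem_ker a b c d e f hnd
  refine le_antisymm hle ?_
  intro x hx
  have hcompl := LinearMap.BilinForm.isCompl_orthogonal_of_restrict_nondegenerate
    (B := dotB {C : Finset (Sym2 (Fin n)) // IsFourCycle n C})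
    (W := Submodule.span ℚ
      {X : {C : Finset (Sym2 (Fin n)) // IsFourCycle n C} → ℚ |
        ∃ a b c d e f : Fin n, [a, b, c, d, e, f].Nodup ∧
          X = doubleDiamondVec n a b c d e f})
    (dotB_refl _) (dotB_restrict_nondeg _ _)
  have hmem : x ∈ (Submodule.span ℚ
      {X : {C : Finset (Sym2 (Fin n)) // IsFourCycle n C} → ℚ |
        ∃ a b c d e f : Fin n, [a, b, c, d, e, f].Nodup ∧
          X = doubleDiamondVec n a b c d e f}) ⊔
      (dotB _).orthogonal (Submodule.span ℚ
      {X : {C : Finset (Sym2 (Fin n)) // IsFourCycle n C} → ℚ |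
        ∃ a b c d e f : Fin n, [a, b, c, d, e, f].Nodup ∧
          X = doubleDiamondVec n a b c d e f}) := by
    rw [hcompl.sup_eq_top]; exact Submodule.mem_top
  rw [Submodule.mem_sup] at hmem
  obtain ⟨dv, hdv, zv, hzv, hsum⟩ := hmem
  have hdk : (edgeCycleMatrix n).mulVecLin dv = 0 := LinearMap.mem_ker.mp (hle hdv)
  have hzk : (edgeCycleMatrix n).mulVecLin zv = 0 := by
    have hzeq : zv = x - dv := eq_sub_of_add_eq' hsum
    rw [hzeq, map_sub, LinearMap.mem_ker.mp hx, hdk, sub_zero]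
  have hZH : ∀ a b c d e f : Fin n, ([a,b,c,d,e,f] : List (Fin n)).Nodup →
      Zfun zv a b c d + Zfun zv a e c f = Zfun zv a b c f + Zfun zv a e c d := by
    intro a b c d e f hnd
    obtain ⟨hab, hac, had, hae, haf, hbc, hbd, hbe, hbf, hcd, hce, hcf, hde, hdf, hef⟩ :=
      nodup6_iff.mp hnd
    have hn1 : ([a,b,c,d] : List (Fin n)).Nodup := nodup4_iff.mpr ⟨hab,hac,had,hbc,hbd,hcd⟩
    have hn2 : ([a,e,c,f] : List (Fin n)).Nodup :=
      nodup4_iff.mpr ⟨hae,hac,haf,hce.symm,hef,hcf⟩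
    have hn3 : ([a,b,c,f] : List (Fin n)).Nodup := nodup4_iff.mpr ⟨hab,hac,haf,hbc,hbf,hcf⟩
    have hn4 : ([a,e,c,d] : List (Fin n)).Nodup :=
      nodup4_iff.mpr ⟨hae,hac,had,hce.symm,hde.symm,hcd⟩
    have hgen : doubleDiamondVec n a b c d e f ∈ Submodule.span ℚ
        {X : {C : Finset (Sym2 (Fin n)) // IsFourCycle n C} → ℚ |
          ∃ a b c d e f : Fin n, [a, b, c, d, e, f].Nodup ∧
            X = doubleDiamondVec n a b c d e f} :=
      Submodule.subset_span ⟨a,b,c,d,e,f,hnd,rfl⟩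
    have horto : dotB _ (doubleDiamondVec n a b c d e f) zv = 0 :=
      (LinearMap.BilinForm.mem_orthogonal_iff.mp hzv) _ hgen
    have hexp : dotB _ (doubleDiamondVec n a b c d e f) zv
        = zv ⟨cycleEdges n a b c d, ⟨a,b,c,d,hn1,rfl⟩⟩
          + zv ⟨cycleEdges n a e c f, ⟨a,e,c,f,hn2,rfl⟩⟩
          - zv ⟨cycleEdges n a b c f, ⟨a,b,c,f,hn3,rfl⟩⟩
          - zv ⟨cycleEdges n a e c d, ⟨a,e,c,d,hn4,rfl⟩⟩ := by
      show ∑ C, doubleDiamondVec n a b c d e f C * zv C = _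
      simp only [doubleDiamondVec, add_mul, sub_mul, Finset.sum_add_distrib,
        Finset.sum_sub_distrib]
      rw [sum_ind1 _ ⟨a,b,c,d,hn1,rfl⟩ zv, sum_ind1 _ ⟨a,e,c,f,hn2,rfl⟩ zv,
        sum_ind1 _ ⟨a,b,c,f,hn3,rfl⟩ zv, sum_ind1 _ ⟨a,e,c,d,hn4,rfl⟩ zv]
    rw [Zfun_eq zv hn1 ⟨a,b,c,d,hn1,rfl⟩, Zfun_eq zv hn2 ⟨a,e,c,f,hn2,rfl⟩,
      Zfun_eq zv hn3 ⟨a,b,c,f,hn3,rfl⟩, Zfun_eq zv hn4 ⟨a,e,c,d,hn4,rfl⟩]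
    rw [hexp] at horto
    linarith [horto]
  have hZ0 : ∀ a b c d : Fin n, (a=b ∨ a=c ∨ a=d ∨ b=c ∨ b=d ∨ c=d) →
      Zfun zv a b c d = 0 := by
    intro a b c d h
    apply Zfun_zero
    rw [nodup4_iff]
    tauto
  have hZK : ∀ u v : Fin n, u ≠ v → ∑ s, ∑ t, Zfun zv u v s t = 0 := ZK_of_ker zv hzk
  have hall := mainZ hZ0 (Zfun_s1 zv) (Zfun_s2 zv) hZH hZK (Zfun_s3 zv) hn
  have hz0 : zv = 0 := by
    funext C
    show zv C = 0
    obtain ⟨a,b,c,d,hnd,hval⟩ := C.2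
    have hC : C = ⟨cycleEdges n a b c d, ⟨a,b,c,d,hnd,rfl⟩⟩ := Subtype.ext hval
    rw [hC, ← Zfun_eq zv hnd ⟨a,b,c,d,hnd,rfl⟩]
    exact hall a b c d
  rw [← hsum, hz0, add_zero]
  exact hdv
end
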